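/- arXiv:math/0211188 — 12 statements merged into one kernel-verified Lean document; each statement's English description precedes it below -/
import Mathlib

section
/- For a fixed positive integer k, the number of lattice paths from (0,0) to (kn,n) that use steps E=(1,0) and N=(0,1) and that never pass above the line y = x/k equals the n-th k-Catalan number C^k_n = (1/(kn+1)) * binomial((k+1)n, n). -/
open Finset
namespace KCat

def cnt (N : ℕ) (T : Finset (ZMod N)) (a b : ℕ) : ℕ :=
  ((Finset.Ico a b).filter (fun (j : ℕ) => (j : ZMod N) ∈ T)).card

lemma cnt_add {N : ℕ} (T : Finset (ZMod N)) {a b c : ℕ} (hab : a ≤ b) (hbc : b ≤ c) :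
    cnt N T a b + cnt N T b c = cnt N T a c := by
  unfold cnt
  rw [← Finset.card_union_of_disjoint
      (Finset.disjoint_filter_filter (Finset.Ico_disjoint_Ico_consecutive a b c)),
    ← Finset.filter_union, Finset.Ico_union_Ico_eq_Ico hab hbc]

lemma cast_inj_of_lt {N a b : ℕ} (ha : a < N) (hb : b < N) (h : (a : ZMod N) = b) : a = b := by
  haveI : NeZero N := ⟨by omega⟩
  rw [← ZMod.val_cast_of_lt ha, h, ZMod.val_cast_of_lt hb]

lemma cnt_zero {N : ℕ} [NeZero N] (T : Finset (ZMod N)) : cnt N T 0 N = T.card := by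
  unfold cnt
  apply Finset.card_bij (fun (j : ℕ) _ => (j : ZMod N))
  · intro a ha; exact (Finset.mem_filter.mp ha).2
  · intro a ha b hb h
    exact cast_inj_of_lt (Finset.mem_Ico.mp (Finset.mem_filter.mp ha).1).2
      (Finset.mem_Ico.mp (Finset.mem_filter.mp hb).1).2 h
  · intro x hx
    refine ⟨x.val, Finset.mem_filter.mpr ⟨Finset.mem_Ico.mpr ⟨Nat.zero_le _, ZMod.val_lt x⟩, ?_⟩, ?_⟩
    · rw [ZMod.natCast_val, ZMod.cast_id]; exact hx
    · rw [ZMod.natCast_val, ZMod.cast_id]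




lemma cnt_single {N : ℕ} (T : Finset (ZMod N)) (a : ℕ) :
    cnt N T a (a + 1) = if (a : ZMod N) ∈ T then 1 else 0 := by
  unfold cnt
  rw [Nat.Ico_succ_singleton, Finset.filter_singleton]
  split <;> simp

lemma cnt_period {N : ℕ} [NeZero N] (T : Finset (ZMod N)) (a : ℕ) :
    cnt N T a (a + N) = T.card := by
  induction a with
  | zero => simpa using cnt_zero T
  | succ a ih =>
    have h1 : cnt N T a (a + 1) + cnt N T (a + 1) (a + N + 1) = cnt N T a (a + N + 1) := by
      have := cnt_add T (a := a) (b := a + 1) (c := a + N + 1) (by omega) (by omega)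
      exact this
    have h2 : cnt N T a (a + N) + cnt N T (a + N) (a + N + 1) = cnt N T a (a + N + 1) :=
      cnt_add T (by omega) (by omega)
    have h3 : cnt N T (a + N) (a + N + 1) = cnt N T a (a + 1) := by
      rw [cnt_single, cnt_single]
      congr 1
      push_cast [ZMod.natCast_self]
      ring_nf
    have h4 : a + 1 + N = a + N + 1 := by omega
    rw [h4]
    omega

lemma cnt_rot {N s p : ℕ} (T : Finset (ZMod N)) :
    cnt N (T.image (fun x => x - (s : ZMod N))) 0 p = cnt N T s (s + p) := by
  unfold cnt
  apply Finset.card_bij' (fun (j : ℕ) _ => j + s) (fun (i : ℕ) _ => i - s)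
  · intro a ha
    rw [Finset.mem_filter, Finset.mem_Ico] at ha ⊢
    obtain ⟨⟨_, hap⟩, hmem⟩ := ha
    refine ⟨by omega, ?_⟩
    rw [Finset.mem_image] at hmem
    obtain ⟨y, hy, hyx⟩ := hmem
    have : y = (a : ZMod N) + s := by rw [← hyx]; ring
    push_cast
    rwa [← this]
  · intro i hi
    rw [Finset.mem_filter, Finset.mem_Ico] at hi ⊢
    obtain ⟨⟨hsi, hip⟩, hmem⟩ := hi
    refine ⟨by omega, ?_⟩
    rw [Finset.mem_image]
    refine ⟨(i : ZMod N), hmem, ?_⟩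
    rw [Nat.cast_sub hsi]
  · intro a ha; omega
  · intro i hi
    rw [Finset.mem_filter, Finset.mem_Ico] at hi
    omega

def Pz (k N : ℕ) (T : Finset (ZMod N)) (t : ℕ) : ℤ :=
  (t : ℤ) - (k + 1) * cnt N T 0 t

lemma Pz_sub {k N : ℕ} (T : Finset (ZMod N)) {s t : ℕ} (h : s ≤ t) :
    Pz k N T t - Pz k N T s = (t - s : ℤ) - (k + 1) * cnt N T s t := by
  have := cnt_add T (Nat.zero_le s) h
  unfold Pz
  push_cast [← this]
  ring

lemma Pz_period {k n N : ℕ} (hN : N = (k + 1) * n + 1) {T : Finset (ZMod N)}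
    (hcard : T.card = n) (t : ℕ) : Pz k N T (t + N) = Pz k N T t + 1 := by
  haveI : NeZero N := ⟨by omega⟩
  have h1 := cnt_add T (Nat.zero_le t) (Nat.le_add_right t N)
  have h2 := cnt_period T t
  rw [hcard] at h2
  unfold Pz
  rw [← h1, h2]
  have hNz : (N : ℤ) = (k + 1) * n + 1 := by exact_mod_cast congrArg (Nat.cast : ℕ → ℤ) hN
  push_cast
  linear_combination hNz

def goodAt (k N : ℕ) (T : Finset (ZMod N)) (s : ℕ) : Prop :=
  ∀ t, s < t → t ≤ s + N → s + (k + 1) * cnt N T s t < t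

lemma goodAt_iff_Pz {k N : ℕ} {T : Finset (ZMod N)} {s : ℕ} :
    goodAt k N T s ↔ ∀ t, s < t → t ≤ s + N → Pz k N T s < Pz k N T t := by
  constructor <;> intro h t h1 h2 <;> have hd := Pz_sub (k := k) T (le_of_lt h1) <;>
    have := h t h1 h2 <;> [skip; skip] <;>
  · have hc : ((k : ℤ) + 1) * (cnt N T s t : ℤ) = ((k + 1) * cnt N T s t : ℕ) := by push_cast; ring
    omega






lemma exists_goodAt {k n N : ℕ} (hN : N = (k + 1) * n + 1) {T : Finset (ZMod N)}
    (hcard : T.card = n) : ∃ s < N, goodAt k N T s := by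
  have hNpos : 0 < N := by omega
  have hne : (Finset.range N).Nonempty := ⟨0, Finset.mem_range.mpr hNpos⟩
  obtain ⟨t0, ht0, hmin⟩ := Finset.exists_min_image (Finset.range N) (Pz k N T) hne
  classical
  set F := (Finset.range N).filter (fun t => Pz k N T t = Pz k N T t0) with hF
  have hFne : F.Nonempty := ⟨t0, by simp [hF, ht0]⟩
  set s := F.max' hFne with hs
  have hsF : s ∈ F := F.max'_mem hFne
  have hsN : s < N := Finset.mem_range.mp (Finset.mem_filter.mp hsF).1
  have hsval : Pz k N T s = Pz k N T t0 := (Finset.mem_filter.mp hsF).2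
  have key1 : ∀ t, t < N → Pz k N T s ≤ Pz k N T t := by
    intro t ht; rw [hsval]; exact hmin t (Finset.mem_range.mpr ht)
  have key2 : ∀ t, s < t → t < N → Pz k N T s < Pz k N T t := by
    intro t hst htN
    rcases lt_or_eq_of_le (key1 t htN) with h | h
    · exact h
    · exfalso
      have : t ∈ F := Finset.mem_filter.mpr ⟨Finset.mem_range.mpr htN, by rw [← h, hsval]⟩
      have := F.le_max' t this
      omega
  have main : ∀ t, s < t → Pz k N T s < Pz k N T t := by
    intro t
    induction t using Nat.strong_induction_on with
    | _ t IH =>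
      intro hst
      by_cases htN : t < N
      · exact key2 t hst htN
      · have ht' : t = (t - N) + N := by omega
        rw [ht', Pz_period hN hcard]
        by_cases h2 : s < t - N
        · have := IH (t - N) (by omega) h2
          omega
        · have := key1 (t - N) (by omega)
          omega
  exact ⟨s, hsN, goodAt_iff_Pz.mpr (fun t h1 _ => main t h1)⟩

lemma goodAt_unique {k n N : ℕ} (hN : N = (k + 1) * n + 1) {T : Finset (ZMod N)}
    (hcard : T.card = n) {s₁ s₂ : ℕ} (h1 : s₁ < N) (h2 : s₂ < N)
    (g1 : goodAt k N T s₁) (g2 : goodAt k N T s₂) : s₁ = s₂ := by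
  have aux : ∀ a b : ℕ, a < N → b < N → a < b → goodAt k N T a → goodAt k N T b → False := by
    intro a b haN hbN hab ga gb
    have A := goodAt_iff_Pz.mp ga b hab (by omega)
    have B := goodAt_iff_Pz.mp gb (a + N) (by omega) (by omega)
    rw [Pz_period hN hcard] at B
    omega
  rcases lt_trichotomy s₁ s₂ with h | h | h
  · exact absurd (aux s₁ s₂ h1 h2 h g1 g2) (by simp)
  · exact h
  · exact absurd (aux s₂ s₁ h2 h1 h g2 g1) (by simp)

lemma goodAt_rot {k N : ℕ} (T : Finset (ZMod N)) (s : ℕ) :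
    goodAt k N (T.image (fun x => x - (s : ZMod N))) 0 ↔ goodAt k N T s := by
  constructor
  · intro h t h1 h2
    have := h (t - s) (by omega) (by omega)
    rw [cnt_rot] at this
    rw [show s + (t - s) = t by omega] at this
    omega
  · intro h p h1 h2
    rw [cnt_rot]
    have := h (s + p) (by omega) (by omega)
    omega





open scoped Classical in
noncomputable def G (k n N : ℕ) [NeZero N] : Finset (Finset (ZMod N)) :=
  (Finset.powersetCard n (Finset.univ : Finset (ZMod N))).filter (fun T => goodAt k N T 0)

lemma core {k n N : ℕ} [NeZero N] (hN : N = (k + 1) * n + 1) :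
    (G k n N).card * N = Nat.choose N n := by
  classical
  set A := Finset.powersetCard n (Finset.univ : Finset (ZMod N)) with hA
  have hmemA : ∀ T : Finset (ZMod N), T ∈ A ↔ T.card = n := by
    intro T; simp [hA, Finset.mem_powersetCard_univ]
  have hcardA : A.card = Nat.choose N n := by
    rw [hA, Finset.card_powersetCard, Finset.card_univ, ZMod.card]
  have h2 : ∀ T ∈ A, ((Finset.range N).filter (fun s => goodAt k N T s)).card = 1 := by
    intro T hT
    obtain ⟨s, hsN, hgood⟩ := exists_goodAt hN ((hmemA T).mp hT)
    rw [Finset.card_eq_one]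
    refine ⟨s, Finset.eq_singleton_iff_unique_mem.mpr ⟨?_, ?_⟩⟩
    · exact Finset.mem_filter.mpr ⟨Finset.mem_range.mpr hsN, hgood⟩
    · intro u hu
      obtain ⟨hu1, hu2⟩ := Finset.mem_filter.mp hu
      exact goodAt_unique hN ((hmemA T).mp hT) (Finset.mem_range.mp hu1) hsN hu2 hgood
  have h3 : ∀ s ∈ Finset.range N,
      (A.filter (fun T => goodAt k N T s)).card = (G k n N).card := by
    intro s hs
    have hinj : Function.Injective (fun x : ZMod N => x - (s : ZMod N)) :=
      fun a b h => by simpa using h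
    have hinj' : Function.Injective (fun x : ZMod N => x + (s : ZMod N)) :=
      fun a b h => by simpa using h
    apply Finset.card_bij (fun T _ => T.image (fun x => x - (s : ZMod N)))
    · intro T hT
      obtain ⟨hT1, hT2⟩ := Finset.mem_filter.mp hT
      have hcard : (T.image (fun x => x - (s : ZMod N))).card = n := by
        rw [Finset.card_image_of_injective _ hinj]; exact (hmemA T).mp hT1
      refine Finset.mem_filter.mpr ⟨(hmemA _).mpr hcard, (goodAt_rot T s).mpr hT2⟩
    · intro T1 h1 T2 h2 h
      exact Finset.image_injective hinj h
    · intro T' hT'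
      obtain ⟨hT1, hT2⟩ := Finset.mem_filter.mp hT'
      refine ⟨T'.image (fun x => x + (s : ZMod N)), ?_, ?_⟩
      · have himg : (T'.image (fun x => x + (s : ZMod N))).image
            (fun x => x - (s : ZMod N)) = T' := by
          rw [Finset.image_image]
          have : ((fun x : ZMod N => x - (s : ZMod N)) ∘ (fun x => x + (s : ZMod N))) = id := by
            funext x; simp
          rw [this, Finset.image_id]
        refine Finset.mem_filter.mpr ⟨(hmemA _).mpr ?_, ?_⟩
        · rw [Finset.card_image_of_injective _ hinj']; exact (hmemA T').mp hT1
        · rw [← goodAt_rot, himg]; exact hT2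
      · rw [Finset.image_image]
        have : ((fun x : ZMod N => x - (s : ZMod N)) ∘ (fun x => x + (s : ZMod N))) = id := by
          funext x; simp
        rw [this, Finset.image_id]
  have calc1 : A.card = ∑ T ∈ A, ((Finset.range N).filter (fun s => goodAt k N T s)).card := by
    rw [Finset.sum_congr rfl h2, Finset.sum_const, smul_eq_mul, mul_one]
  have calc2 : ∑ T ∈ A, ((Finset.range N).filter (fun s => goodAt k N T s)).card
      = ∑ s ∈ Finset.range N, (A.filter (fun T => goodAt k N T s)).card := by
    simp only [Finset.card_filter]
    exact Finset.sum_comm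
  have calc3 : ∑ s ∈ Finset.range N, (A.filter (fun T => goodAt k N T s)).card
      = N * (G k n N).card := by
    rw [Finset.sum_congr rfl h3, Finset.sum_const, Finset.card_range, smul_eq_mul]
  rw [mul_comm, ← calc3, ← calc2, ← calc1, hcardA]







lemma cnt_cast {N t : ℕ} {B : Finset ℕ} (hB : ∀ b ∈ B, b < N) (ht : t ≤ N) :
    cnt N (B.image (Nat.cast : ℕ → ZMod N)) 0 t = (B.filter (· < t)).card := by
  unfold cnt
  congr 1
  ext j
  simp only [Finset.mem_filter, Finset.mem_Ico, Finset.mem_image, Nat.zero_le, true_and]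
  constructor
  · rintro ⟨hjt, b, hb, hcast⟩
    have : b = j := cast_inj_of_lt (hB b hb) (lt_of_lt_of_le hjt ht) hcast
    exact ⟨this ▸ hb, hjt⟩
  · rintro ⟨hjB, hjt⟩
    exact ⟨hjt, j, hjB, rfl⟩

lemma filter_le_of_lt_succ (B : Finset ℕ) (p : ℕ) :
    B.filter (· < p + 1) = B.filter (· ≤ p) := by
  apply Finset.filter_congr
  intro x _
  simp [Nat.lt_succ_iff]

lemma goodAt_cast_iff {k N m : ℕ} (hN : N = m + 1) {B : Finset ℕ}
    (hB : ∀ b ∈ B, 1 ≤ b ∧ b ≤ m) :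
    goodAt k N (B.image (Nat.cast : ℕ → ZMod N)) 0 ↔
      ∀ p ≤ m, (k + 1) * (B.filter (· ≤ p)).card ≤ p := by
  have hB' : ∀ b ∈ B, b < N := fun b hb => by have := hB b hb; omega
  constructor
  · intro h p hp
    have := h (p + 1) (by omega) (by omega)
    rw [cnt_cast hB' (by omega), filter_le_of_lt_succ] at this
    omega
  · intro h t h1 h2
    rw [cnt_cast hB' (by omega)]
    have ht1 : t - 1 ≤ m := by omega
    have := h (t - 1) ht1
    have hfil : B.filter (· < t) = B.filter (· ≤ t - 1) := by
      apply Finset.filter_congr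
      intro x _
      omega
    rw [hfil]
    omega

lemma cond3_iff {k m : ℕ} {B : Finset ℕ} (hB : ∀ b ∈ B, 1 ≤ b ∧ b ≤ m) :
    (∀ p ≤ m, k * (B.filter (· ≤ p)).card ≤ p - (B.filter (· ≤ p)).card) ↔
      ∀ p ≤ m, (k + 1) * (B.filter (· ≤ p)).card ≤ p := by
  have hc : ∀ p : ℕ, (B.filter (· ≤ p)).card ≤ p := by
    intro p
    calc (B.filter (· ≤ p)).card ≤ (Finset.Icc 1 p).card := by
          apply Finset.card_le_card
          intro x hx
          obtain ⟨hxB, hxp⟩ := Finset.mem_filter.mp hx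
          exact Finset.mem_Icc.mpr ⟨(hB x hxB).1, by simpa using hxp⟩
      _ = p := by simp
  constructor <;> intro h p hp <;> have h1 := h p hp <;> have h2 := hc p <;>
    have h3 : (k + 1) * (B.filter (· ≤ p)).card
        = k * (B.filter (· ≤ p)).card + (B.filter (· ≤ p)).card := by ring
  all_goals omega

lemma zero_not_mem_of_good {k N : ℕ} (hNpos : 0 < N) {T : Finset (ZMod N)}
    (h : goodAt k N T 0) : (0 : ZMod N) ∉ T := by
  have h1 := h 1 one_pos (by omega)
  have h2 : cnt N T 0 1 = if (0 : ZMod N) ∈ T then 1 else 0 := by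
    simpa using cnt_single T 0
  intro hmem
  rw [if_pos hmem] at h2
  rw [h2] at h1
  omega

lemma image_val_image_cast {N : ℕ} {B : Finset ℕ} (hB : ∀ b ∈ B, b < N) :
    (B.image (Nat.cast : ℕ → ZMod N)).image ZMod.val = B := by
  ext x
  constructor
  · intro hx
    obtain ⟨y, hy, rfl⟩ := Finset.mem_image.mp hx
    obtain ⟨b, hb, rfl⟩ := Finset.mem_image.mp hy
    rwa [ZMod.val_cast_of_lt (hB b hb)]
  · intro hx
    exact Finset.mem_image.mpr ⟨_, Finset.mem_image.mpr ⟨x, hx, rfl⟩,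
      ZMod.val_cast_of_lt (hB x hx)⟩

lemma image_cast_image_val {N : ℕ} [NeZero N] (T : Finset (ZMod N)) :
    (T.image ZMod.val).image (Nat.cast : ℕ → ZMod N) = T := by
  ext x
  constructor
  · intro hx
    obtain ⟨b, hb, rfl⟩ := Finset.mem_image.mp hx
    obtain ⟨y, hy, rfl⟩ := Finset.mem_image.mp hb
    rwa [ZMod.natCast_val, ZMod.cast_id]
  · intro hx
    exact Finset.mem_image.mpr ⟨x.val, Finset.mem_image.mpr ⟨x, hx, rfl⟩,
      by rw [ZMod.natCast_val, ZMod.cast_id]⟩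


end KCat

open KCat in
/-- **k-Catalan path count.** A lattice path from `(0,0)` to `(kn, n)` with East and
North steps is encoded by the set `B ⊆ [1, kn+n]` of positions of its North steps
(`B.card = n`).  After `p` steps the path is at `(p - c, c)` where
`c = (B.filter (· ≤ p)).card`; never passing above the line `y = x/k` means
`k * c ≤ p - c` for every `p`.  The number of such paths, times `kn + 1`,
equals `((k+1)n choose n)`, i.e. the count is the `k`-Catalan number `C^k_n`. -/
theorem stmt0 (k n : ℕ) (hk : 0 < k) :
    Nat.card {B : Finset ℕ // B ⊆ Finset.Icc 1 (k * n + n) ∧ B.card = n ∧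
        ∀ p ≤ k * n + n,
          k * (B.filter (· ≤ p)).card ≤ p - (B.filter (· ≤ p)).card} * (k * n + 1)
      = Nat.choose ((k + 1) * n) n := by
  set m := k * n + n with hm
  set N := m + 1 with hNdef
  haveI : NeZero N := ⟨by omega⟩
  have hN : N = (k + 1) * n + 1 := by rw [hNdef, hm]; ring
  -- membership bounds helper
  have hbnd : ∀ (B : Finset ℕ), B ⊆ Finset.Icc 1 m → ∀ b ∈ B, 1 ≤ b ∧ b ≤ m := by
    intro B hsub b hb
    exact Finset.mem_Icc.mp (hsub hb)
  have hGmem : ∀ T : Finset (ZMod N),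
      T ∈ G k n N ↔ T.card = n ∧ goodAt k N T 0 := by
    intro T
    classical
    rw [G, Finset.mem_filter, Finset.mem_powersetCard_univ]
  -- the equivalence
  have hcardEq : Nat.card {B : Finset ℕ // B ⊆ Finset.Icc 1 m ∧ B.card = n ∧
      ∀ p ≤ m, k * (B.filter (· ≤ p)).card ≤ p - (B.filter (· ≤ p)).card}
      = (G k n N).card := by
    rw [← Nat.card_eq_finsetCard]
    have hmemG : ∀ (B : Finset ℕ), (B ⊆ Finset.Icc 1 m ∧ B.card = n ∧
        ∀ p ≤ m, k * (B.filter (· ≤ p)).card ≤ p - (B.filter (· ≤ p)).card) →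
        B.image (Nat.cast : ℕ → ZMod N) ∈ G k n N := by
      rintro B ⟨hsub, hcard, hcond⟩
      refine (hGmem _).mpr ⟨?_, ?_⟩
      · rw [Finset.card_image_of_injOn, hcard]
        intro a ha b hb h
        exact cast_inj_of_lt (by have := hbnd B hsub a ha; omega)
          (by have := hbnd B hsub b hb; omega) h
      · rw [goodAt_cast_iff hNdef (hbnd B hsub)]
        exact (cond3_iff (hbnd B hsub)).mp hcond
    apply Nat.card_eq_of_bijective
      (fun B => ⟨B.1.image (Nat.cast : ℕ → ZMod N), hmemG B.1 B.2⟩)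
    constructor
    · rintro ⟨B₁, hB₁⟩ ⟨B₂, hB₂⟩ h
      have himg : B₁.image (Nat.cast : ℕ → ZMod N) = B₂.image (Nat.cast : ℕ → ZMod N) :=
        congrArg Subtype.val h
      apply Subtype.ext
      show B₁ = B₂
      have h1 : ∀ b ∈ B₁, b < N := fun b hb => by have := hbnd B₁ hB₁.1 b hb; omega
      have h2 : ∀ b ∈ B₂, b < N := fun b hb => by have := hbnd B₂ hB₂.1 b hb; omega
      rw [← image_val_image_cast h1, himg, image_val_image_cast h2]
    · rintro ⟨T, hT⟩
      obtain ⟨hcard, hgood⟩ := (hGmem T).mp hT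
      have h0 : (0 : ZMod N) ∉ T := zero_not_mem_of_good (by omega) hgood
      have hB : ∀ b ∈ T.image ZMod.val, 1 ≤ b ∧ b ≤ m := by
        intro b hb
        obtain ⟨y, hy, rfl⟩ := Finset.mem_image.mp hb
        have hylt : y.val < N := ZMod.val_lt y
        have hy0 : y.val ≠ 0 := by
          intro hv
          exact h0 ((ZMod.val_eq_zero y).mp hv ▸ hy)
        omega
      refine ⟨⟨T.image ZMod.val, ?_, ?_, ?_⟩, ?_⟩
      · intro x hx
        exact Finset.mem_Icc.mpr (hB x hx)
      · rw [Finset.card_image_of_injective _ (ZMod.val_injective N), hcard]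
      · rw [cond3_iff hB, ← goodAt_cast_iff hNdef hB, image_cast_image_val]
        exact hgood
      · exact Subtype.ext (image_cast_image_val T)
  rw [hcardEq]
  set g := (G k n N).card with hg
  have hcore := core (k := k) (n := n) (N := N) hN
  rw [← hg] at hcore
  rw [hNdef] at hcore
  have key : Nat.choose m n * (m + 1) = Nat.choose (m + 1) n * (m + 1 - n) :=
    Nat.choose_mul_succ_eq m n
  have hmn : m + 1 - n = k * n + 1 := by omega
  have hchoose : Nat.choose ((k + 1) * n) n = Nat.choose m n := by
    congr 1
    rw [hm]; ring
  rw [hchoose]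
  apply Nat.eq_of_mul_eq_mul_right (show 0 < m + 1 by omega)
  calc g * (k * n + 1) * (m + 1)
      = g * (m + 1) * (k * n + 1) := by ring
    _ = Nat.choose (m + 1) n * (k * n + 1) := by rw [hcore]
    _ = Nat.choose (m + 1) n * (m + 1 - n) := by rw [hmn]
    _ = Nat.choose m n * (m + 1) := key.symm
end

section
/- For integers m ≥ kn ≥ 0, the number of lattice paths from (0,0) to (m,n) with steps E=(1,0) and N=(0,1) that never go above the line y = x/k equals ((m - kn + 1)/(m + n + 1)) * binomial(m + n + 1, n). -/
open Finset

/-- Auxiliary: the finset of (encodings of) valid lattice paths. -/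
def S (k m n : ℕ) : Finset (Finset ℕ) :=
  ((Finset.Icc 1 (m + n)).powerset).filter fun B => B.card = n ∧
    ∀ p ≤ m + n, k * (B.filter (· ≤ p)).card ≤ p - (B.filter (· ≤ p)).card

lemma S_zero (k m : ℕ) : S k m 0 = {∅} := by
  ext B
  simp only [S, mem_filter, mem_powerset, mem_singleton, Finset.card_eq_zero]
  constructor
  · rintro ⟨-, h, -⟩; exact h
  · rintro rfl
    refine ⟨by simp, rfl, ?_⟩
    intro p hp
    simp

lemma S_mzero (k n : ℕ) (hk : k * n = 0) : S k 0 n = {Finset.Icc 1 n} := by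
  ext B
  simp only [S, mem_filter, mem_powerset, mem_singleton, zero_add]
  constructor
  · rintro ⟨h1, h2, -⟩
    exact Finset.eq_of_subset_of_card_le h1 (by simp [h2])
  · rintro rfl
    refine ⟨subset_rfl, by simp, ?_⟩
    intro p hp
    have hc : ((Finset.Icc 1 n).filter (· ≤ p)).card ≤ n := by
      apply le_trans (Finset.card_filter_le _ _); simp
    have : k * ((Finset.Icc 1 n).filter (· ≤ p)).card = 0 := by
      rcases Nat.mul_eq_zero.mp hk with h | h
      · simp [h]
      · have hc0 : ((Finset.Icc 1 n).filter (· ≤ p)).card = 0 := by omega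
        simp [hc0]
    omega

lemma S_empty (k m n : ℕ) (h : m < k * n) : S k m n = ∅ := by
  rw [Finset.eq_empty_iff_forall_notMem]
  intro B hB
  simp only [S, mem_filter, mem_powerset] at hB
  obtain ⟨h1, h2, h3⟩ := hB
  have hfe : B.filter (· ≤ m + n) = B := by
    apply Finset.filter_true_of_mem
    intro x hx; have := h1 hx; simp only [Finset.mem_Icc] at this; omega
  have := h3 (m + n) le_rfl
  rw [hfe, h2] at this
  omega

lemma S_filter_not (k m n : ℕ) (h : k * n ≤ m + 1) :
    (S k (m+1) n).filter (fun B => (m+1)+n ∉ B) = S k m n := by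
  ext B
  simp only [S, mem_filter, mem_powerset]
  constructor
  · rintro ⟨⟨h1, h2, h3⟩, h4⟩
    refine ⟨?_, h2, fun p hp => h3 p (by omega)⟩
    intro x hx
    have := h1 hx
    simp only [Finset.mem_Icc] at this ⊢
    have : x ≠ m + 1 + n := fun e => h4 (e ▸ hx)
    have := h1 hx; simp only [Finset.mem_Icc] at this
    omega
  · rintro ⟨h1, h2, h3⟩
    have hsub : B ⊆ Finset.Icc 1 (m + 1 + n) := by
      intro x hx; have := h1 hx; simp only [Finset.mem_Icc] at this ⊢; omega
    have hnm : m + 1 + n ∉ B := by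
      intro hx; have := h1 hx; simp only [Finset.mem_Icc] at this; omega
    refine ⟨⟨hsub, h2, ?_⟩, hnm⟩
    intro p hp
    rcases Nat.lt_or_ge p (m + 1 + n) with hlt | hge
    · exact h3 p (by omega)
    · have hpe : p = m + 1 + n := by omega
      have : B.filter (· ≤ p) = B := by
        apply Finset.filter_true_of_mem
        intro x hx; have := h1 hx; simp only [Finset.mem_Icc] at this; omega
      rw [this, h2]
      omega

lemma S_filter_mem (k m n : ℕ) (h : k * (n+1) ≤ m) :
    ((S k m (n+1)).filter (fun B => m + (n+1) ∈ B)).card = (S k m n).card := by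
  apply Finset.card_bij' (fun B _ => B.erase (m + (n+1))) (fun B _ => insert (m + (n+1)) B)
  · rintro B hB
    simp only [mem_filter] at hB
    exact Finset.insert_erase hB.2
  · rintro B hB
    simp only [S, mem_filter, mem_powerset] at hB
    apply Finset.erase_insert
    intro hx; have := hB.1 hx; simp only [Finset.mem_Icc] at this; omega
  · -- maps into S k m n
    rintro B hB
    simp only [S, mem_filter, mem_powerset] at hB ⊢
    obtain ⟨⟨h1, h2, h3⟩, h4⟩ := hB
    refine ⟨?_, ?_, ?_⟩
    · intro x hx
      have hxB := Finset.mem_of_mem_erase hx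
      have hxne := Finset.ne_of_mem_erase hx
      have := h1 hxB; simp only [Finset.mem_Icc] at this ⊢; omega
    · rw [Finset.card_erase_of_mem h4, h2]
      omega
    · intro p hp
      have hfe : (B.erase (m + (n+1))).filter (· ≤ p) = B.filter (· ≤ p) := by
        rw [Finset.filter_erase]
        apply Finset.erase_eq_of_notMem
        simp only [Finset.mem_filter]
        rintro ⟨-, hle⟩; omega
      rw [hfe]
      exact h3 p (by omega)
  · -- inverse maps into the filtered set
    rintro B hB
    simp only [S, mem_filter, mem_powerset] at hB ⊢
    obtain ⟨h1, h2, h3⟩ := hB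
    have hnotmem : m + (n+1) ∉ B := by
      intro hx; have := h1 hx; simp only [Finset.mem_Icc] at this; omega
    refine ⟨⟨?_, ?_, ?_⟩, Finset.mem_insert_self _ _⟩
    · intro x hx
      rcases Finset.mem_insert.mp hx with rfl | hx
      · simp only [Finset.mem_Icc]; omega
      · have := h1 hx; simp only [Finset.mem_Icc] at this ⊢; omega
    · rw [Finset.card_insert_of_notMem hnotmem, h2]
    · intro p hp
      rcases Nat.lt_or_ge p (m + (n+1)) with hlt | hge
      · have hfe : (insert (m + (n+1)) B).filter (· ≤ p) = B.filter (· ≤ p) := by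
          rw [Finset.filter_insert, if_neg (by omega)]
        rw [hfe]
        exact h3 p (by omega)
      · have hpe : p = m + (n+1) := by omega
        have hfe : (insert (m + (n+1)) B).filter (· ≤ p) = insert (m + (n+1)) B := by
          apply Finset.filter_true_of_mem
          intro x hx
          rcases Finset.mem_insert.mp hx with rfl | hx
          · omega
          · have := h1 hx; simp only [Finset.mem_Icc] at this; omega
        rw [hfe, Finset.card_insert_of_notMem hnotmem, h2]
        omega

lemma S_card (k : ℕ) : ∀ N m n, m + n = N → k * n ≤ m →
    (S k m n).card * (m + n + 1) = (m - k * n + 1) * Nat.choose (m + n + 1) n := by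
  intro N
  induction N using Nat.strong_induction_on with
  | _ N ih =>
    intro m n hN h
    match n, m with
    | 0, m => simp [S_zero]
    | (n+1), 0 =>
      have hk : k * (n + 1) = 0 := by omega
      rw [S_mzero k (n+1) hk]
      simp only [Finset.card_singleton, hk, zero_add]
      rw [Nat.choose_succ_self_right]
    | (n+1), (m+1) =>
      -- split by whether the last step is North
      have hsplit := Finset.card_filter_add_card_filter_not
        (s := S k (m+1) (n+1)) (p := fun B => (m+1)+(n+1) ∈ B)
      have e1 : (S k (m+1) (n+1)).filter (fun B => ¬ ((m+1)+(n+1) ∈ B)) = S k m (n+1) :=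
        S_filter_not k m (n+1) h
      have e2 : ((S k (m+1) (n+1)).filter (fun B => (m+1)+(n+1) ∈ B)).card
          = (S k (m+1) n).card := by
        have : (m+1) + (n+1) = (m+1) + (n+1) := rfl
        exact S_filter_mem k (m+1) n h
      set a := m + 1 - k * (n+1) with ha
      have hm : m + 1 = a + k * (n+1) := by omega
      -- IH for the East-removal
      have hA : (S k m (n+1)).card * (m + n + 2) = a * Nat.choose (m + n + 2) (n+1) := by
        rcases Nat.lt_or_ge m (k * (n+1)) with hlt | hge
        · rw [S_empty k m (n+1) hlt]
          have : a = 0 := by omega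
          simp [this]
        · have := ih (m + (n+1)) (by omega) m (n+1) rfl hge
          have harr : m + (n+1) + 1 = m + n + 2 := by omega
          rw [harr] at this
          rw [this]
          congr 1
          omega
      -- IH for the North-removal
      have hB : (S k (m+1) n).card * (m + n + 2) = (a + k + 1) * Nat.choose (m + n + 2) n := by
        have hkn : k * n ≤ m + 1 := by
          have : k * n ≤ k * (n+1) := Nat.mul_le_mul_left k (by omega)
          omega
        have := ih ((m+1) + n) (by omega) (m+1) n rfl hkn
        have harr : (m+1) + n + 1 = m + n + 2 := by omega
        rw [harr] at this
        rw [this]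
        congr 1
        have : k * (n+1) = k * n + k := by ring
        omega
      -- binomial identities
      have hC : Nat.choose (m + n + 2) (n+1) * (n+1)
          = Nat.choose (m + n + 2) n * (a + k * (n+1) + 1) := by
        have := Nat.choose_succ_right_eq (m + n + 2) n
        rw [this]
        congr 1
        omega
      have hP : Nat.choose (m + n + 3) (n+1)
          = Nat.choose (m + n + 2) n + Nat.choose (m + n + 2) (n+1) := by
        simpa [Nat.succ_eq_add_one] using Nat.choose_succ_succ (m + n + 2) n
      -- assemble
      have hg : (S k (m+1) (n+1)).card = (S k (m+1) n).card + (S k m (n+1)).card := by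
        rw [← hsplit, e1, e2]
      have hgoalshape : (m + 1) + (n+1) + 1 = m + n + 3 := by omega
      rw [hgoalshape]
      have haa : m + 1 - k * (n+1) + 1 = a + 1 := by omega
      rw [haa, hg, hP]
      -- multiply both sides by (m+n+2) and conclude by linear arithmetic over ℤ
      apply Nat.eq_of_mul_eq_mul_right (show 0 < m + n + 2 by omega)
      set g1 := (S k m (n+1)).card
      set g2 := (S k (m+1) n).card
      set c0 := Nat.choose (m + n + 2) n
      set c1 := Nat.choose (m + n + 2) (n+1)
      zify at hA hB hC hm ⊢
      linear_combination ((m:ℤ)+n+3)*hA + ((m:ℤ)+n+3)*hB - ((k:ℤ)+1)*hC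
        + ((k:ℤ)*c0 - c1)*hm

/-- **Generalized ballot numbers.** For `m ≥ kn ≥ 0`, the number of lattice paths
from `(0,0)` to `(m, n)` (encoded by the set `B` of positions of North steps among
`[1, m+n]`, with `B.card = n`) that never go above the line `y = x/k`
(i.e. `k * c ≤ p - c` for each prefix length `p`, where `c` is the number of North
steps in the prefix), times `m + n + 1`, equals `(m - kn + 1) * ((m+n+1) choose n)`. -/
theorem stmt1 (k m n : ℕ) (h : k * n ≤ m) :
    Nat.card {B : Finset ℕ // B ⊆ Finset.Icc 1 (m + n) ∧ B.card = n ∧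
        ∀ p ≤ m + n,
          k * (B.filter (· ≤ p)).card ≤ p - (B.filter (· ≤ p)).card} * (m + n + 1)
      = (m - k * n + 1) * Nat.choose (m + n + 1) n := by
  have e : ∀ B : Finset ℕ, (B ⊆ Finset.Icc 1 (m + n) ∧ B.card = n ∧
        ∀ p ≤ m + n,
          k * (B.filter (· ≤ p)).card ≤ p - (B.filter (· ≤ p)).card) ↔ B ∈ S k m n := by
    intro B
    simp [S, Finset.mem_filter, Finset.mem_powerset, and_assoc]
  rw [Nat.card_congr (Equiv.subtypeEquivRight e), Nat.card_eq_finsetCard]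
  exact S_card k (m + n) m n rfl h
end

section
/- The number of paths of n steps in the alphabet {U, D}, where U = (1,1) and D = (1,-1), that start at (0,0) and never pass below the x-axis (not necessarily ending on the x-axis) is binomial(n, ⌈n/2⌉). -/
/-!
Sort the paths by their number `k` of up steps. A nonnegative path with `k` up steps ends at
height `2k - n ≥ 0`, and for `n ≤ 2k` these paths are counted by the ballot number
`C(n, k) - C(n, k + 1)`: removing the last step gives the same Pascal recursion on both sides.
Summing the ballot numbers over `⌈n/2⌉ ≤ k ≤ n` telescopes to `C(n, ⌈n/2⌉)`.
-/

open Finset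

/-- `B` is the set of positions of the up steps, so the height after `p` steps is
`2 * #{x ∈ B | x ≤ p} - p`. -/
def IsNonnegPath (n : ℕ) (B : Finset ℕ) : Prop :=
  B ⊆ Icc 1 n ∧ ∀ p ≤ n, p ≤ 2 * #{x ∈ B | x ≤ p}

instance (n : ℕ) : DecidablePred (IsNonnegPath n) :=
  fun _ => inferInstanceAs (Decidable (_ ∧ _))

def nonnegPaths (n : ℕ) : Finset (Finset ℕ) := {B ∈ (Icc 1 n).powerset | IsNonnegPath n B}

def nonnegPathsWithUps (n k : ℕ) : Finset (Finset ℕ) := {B ∈ nonnegPaths n | #B = k}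

@[simp]
lemma mem_nonnegPaths {n : ℕ} {B : Finset ℕ} : B ∈ nonnegPaths n ↔ IsNonnegPath n B := by
  rw [nonnegPaths, mem_filter, mem_powerset]
  exact and_iff_right_of_imp And.left

@[simp]
lemma mem_nonnegPathsWithUps {n k : ℕ} {B : Finset ℕ} :
    B ∈ nonnegPathsWithUps n k ↔ IsNonnegPath n B ∧ #B = k := by
  rw [nonnegPathsWithUps, mem_filter, mem_nonnegPaths]

lemma filter_le_eq_self_of_subset_Icc {B : Finset ℕ} {a n p : ℕ} (hB : B ⊆ Icc a n)
    (hp : n ≤ p) : {x ∈ B | x ≤ p} = B :=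
  filter_true_of_mem fun _ hx => (mem_Icc.1 (hB hx)).2.trans hp

lemma subset_Icc_succ_iff_of_notMem {B : Finset ℕ} {a n : ℕ} (ha : a ≤ n + 1)
    (hB : n + 1 ∉ B) : B ⊆ Icc a (n + 1) ↔ B ⊆ Icc a n := by
  rw [← insert_Icc_right_eq_Icc_add_one ha, subset_insert_iff_of_notMem hB]

lemma forall_le_succ_iff {P : ℕ → Prop} {n : ℕ} :
    (∀ p ≤ n + 1, P p) ↔ (∀ p ≤ n, P p) ∧ P (n + 1) := by
  simp only [Nat.le_succ_iff, or_imp, forall_and, forall_eq]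

namespace IsNonnegPath

variable {n : ℕ} {B : Finset ℕ}

lemma le_two_mul_card (h : IsNonnegPath n B) : n ≤ 2 * #B :=
  (h.2 n le_rfl).trans (Nat.mul_le_mul_left 2 (card_filter_le B _))

lemma succ_notMem (h : IsNonnegPath n B) : n + 1 ∉ B :=
  fun hn => by simpa using (mem_Icc.1 (h.1 hn)).2

end IsNonnegPath

lemma isNonnegPath_succ_iff_of_notMem {n : ℕ} {B : Finset ℕ} (hB : n + 1 ∉ B)
    (hcard : n + 1 ≤ 2 * #B) : IsNonnegPath (n + 1) B ↔ IsNonnegPath n B := by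
  rw [IsNonnegPath, subset_Icc_succ_iff_of_notMem (by omega) hB, forall_le_succ_iff]
  refine and_congr_right fun hsub => and_iff_left ?_
  rwa [filter_le_eq_self_of_subset_Icc hsub n.le_succ]

lemma isNonnegPath_succ_insert_iff {n : ℕ} {B : Finset ℕ} (hB : n + 1 ∉ B) :
    IsNonnegPath (n + 1) (insert (n + 1) B) ↔ IsNonnegPath n B := by
  have hsub : insert (n + 1) B ⊆ Icc 1 (n + 1) ↔ B ⊆ Icc 1 n := by
    rw [insert_subset_iff, subset_Icc_succ_iff_of_notMem (by omega) hB]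
    simp
  rw [IsNonnegPath, hsub, forall_le_succ_iff]
  refine and_congr_right fun hB' => ?_
  have hle : ∀ p ≤ n, {x ∈ insert (n + 1) B | x ≤ p} = {x ∈ B | x ≤ p} := fun p hp => by
    rw [filter_insert, if_neg (by omega)]
  rw [forall₂_congr fun p hp => by rw [hle p hp],
    filter_le_eq_self_of_subset_Icc (hsub.2 hB') le_rfl, card_insert_of_notMem hB]
  refine and_iff_left_of_imp fun h => ?_
  have := h n le_rfl
  rw [filter_le_eq_self_of_subset_Icc hB' le_rfl] at this
  omega

lemma nonnegPathsWithUps_eq_empty {n k : ℕ} (h : 2 * k < n) : nonnegPathsWithUps n k = ∅ :=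
  eq_empty_of_forall_notMem fun B hB => by
    obtain ⟨hpath, rfl⟩ := mem_nonnegPathsWithUps.1 hB
    have := hpath.le_two_mul_card
    omega

lemma card_nonnegPathsWithUps_succ_succ {n k : ℕ} (h : n + 1 ≤ 2 * (k + 1)) :
    #(nonnegPathsWithUps (n + 1) (k + 1)) =
      #(nonnegPathsWithUps n (k + 1)) + #(nonnegPathsWithUps n k) := by
  have hlast_notMem : {B ∈ nonnegPathsWithUps (n + 1) (k + 1) | n + 1 ∉ B} =
      nonnegPathsWithUps n (k + 1) := by
    ext B
    simp only [mem_filter, mem_nonnegPathsWithUps]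
    constructor
    · rintro ⟨⟨hpath, hcard⟩, hB⟩
      exact ⟨(isNonnegPath_succ_iff_of_notMem hB (hcard ▸ h)).1 hpath, hcard⟩
    · rintro ⟨hpath, hcard⟩
      have hB := hpath.succ_notMem
      exact ⟨⟨(isNonnegPath_succ_iff_of_notMem hB (hcard ▸ h)).2 hpath, hcard⟩, hB⟩
  have hlast_mem : #{B ∈ nonnegPathsWithUps (n + 1) (k + 1) | n + 1 ∈ B} =
      #(nonnegPathsWithUps n k) := by
    refine card_nbij' (·.erase (n + 1)) (insert (n + 1)) ?_ ?_ ?_ ?_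
    · intro B hB
      simp only [mem_coe, mem_filter, mem_nonnegPathsWithUps] at hB ⊢
      obtain ⟨⟨hpath, hcard⟩, hB⟩ := hB
      rw [← insert_erase hB, isNonnegPath_succ_insert_iff (notMem_erase _ _)] at hpath
      exact ⟨hpath, by rw [card_erase_of_mem hB, hcard, Nat.add_sub_cancel]⟩
    · intro B hB
      simp only [mem_coe, mem_filter, mem_nonnegPathsWithUps] at hB ⊢
      obtain ⟨hpath, hcard⟩ := hB
      have hB := hpath.succ_notMem
      exact ⟨⟨(isNonnegPath_succ_insert_iff hB).2 hpath,
        by rw [card_insert_of_notMem hB, hcard]⟩, mem_insert_self _ _⟩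
    · intro B hB
      exact insert_erase (mem_filter.1 hB).2
    · intro B hB
      exact erase_insert (mem_nonnegPathsWithUps.1 hB).1.succ_notMem
  rw [← card_filter_add_card_filter_not (n + 1 ∈ ·), hlast_mem, hlast_notMem, add_comm]

/-- The ballot formula, with the subtraction moved to the left. -/
lemma card_nonnegPathsWithUps_add_choose {n k : ℕ} (h : n ≤ 2 * k) :
    #(nonnegPathsWithUps n k) + n.choose (k + 1) = n.choose k := by
  induction n generalizing k with
  | zero =>
    cases k with
    | zero => decide
    | succ k => simp [nonnegPathsWithUps, nonnegPaths]
  | succ n ih =>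
    obtain ⟨j, rfl⟩ : ∃ j, k = j + 1 := ⟨k - 1, by omega⟩
    rw [card_nonnegPathsWithUps_succ_succ h, Nat.choose_succ_succ', Nat.choose_succ_succ']
    have ih_succ := ih (k := j + 1) (by omega)
    rcases le_or_gt n (2 * j) with hn | hn
    · have := ih hn
      omega
    · obtain rfl : n = 2 * j + 1 := by omega
      rw [nonnegPathsWithUps_eq_empty hn, card_empty, ← Nat.choose_symm_half]
      omega

lemma sum_Ico_add_eq_of_add_eq {M : Type*} [AddCommMonoid M] {a f : ℕ → M} {j N : ℕ}
    (hjN : j ≤ N) (h : ∀ k ∈ Ico j N, a k + f (k + 1) = f k) :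
    ∑ k ∈ Ico j N, a k + f N = f j := by
  induction N, hjN using Nat.le_induction with
  | base => simp
  | succ N hjN ih =>
    rw [sum_Ico_succ_top hjN, add_assoc, h N (by simp [hjN]),
      ih fun k hk => h k (Ico_subset_Ico_right N.le_succ hk)]

/-- **Nonnegative U/D paths.** A path of `n` steps in `{U, D}` starting at `(0,0)` is
encoded by the set `B ⊆ [1, n]` of positions of its Up steps.  After `p` steps its
height is `2 * (B.filter (· ≤ p)).card - p`; never passing below the x-axis means
`p ≤ 2 * (B.filter (· ≤ p)).card` for all `p ≤ n`.  The number of such paths is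
`n choose ⌈n/2⌉`. -/
theorem stmt2 (n : ℕ) :
    Nat.card {B : Finset ℕ // B ⊆ Finset.Icc 1 n ∧
        ∀ p ≤ n, p ≤ 2 * (B.filter (· ≤ p)).card}
      = Nat.choose n ((n + 1) / 2) := by
  have hcard : Nat.card {B // IsNonnegPath n B} = #(nonnegPaths n) :=
    (Nat.card_congr (Equiv.subtypeEquivRight fun _ => mem_nonnegPaths.symm)).trans
      (Nat.card_eq_finsetCard _)
  have hfib : #(nonnegPaths n) = ∑ k ∈ range (n + 1), #(nonnegPathsWithUps n k) :=
    card_eq_sum_card_fiberwise fun B hB => mem_range.2 <| Nat.lt_succ_of_le <| by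
      simpa using card_le_card (mem_nonnegPaths.1 hB).1
  set m := (n + 1) / 2 with hm
  have hlow : ∑ k ∈ range m, #(nonnegPathsWithUps n k) = 0 :=
    sum_eq_zero fun k hk => by rw [nonnegPathsWithUps_eq_empty (by simp at hk; omega), card_empty]
  have hhigh : ∑ k ∈ Ico m (n + 1), #(nonnegPathsWithUps n k) = n.choose m := by
    simpa [Nat.choose_succ_self] using
      sum_Ico_add_eq_of_add_eq (j := m) (N := n + 1) (f := n.choose) (by omega)
        fun k hk => card_nonnegPathsWithUps_add_choose (by simp at hk; omega)
  change Nat.card {B // IsNonnegPath n B} = _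
  rw [hcard, hfib, ← sum_range_add_sum_Ico (m := m) (n := n + 1) _ (by omega), hlow, hhigh,
    zero_add]
end

section
/- Let C(z) = Σ_{n≥0} (1/(kn+1)) * binomial((k+1)n, n) * z^n be the generating function for the k-Catalan numbers. Then for positive integers j and t, the coefficient of z^t in C(z)^j equals (j/t) * binomial((k+1)t + j - 1, t - 1). -/
/-!
The numbers `R(j, t) = j/t * ((k+1)t + j - 1 choose t - 1)` (with `R(j, 0) = 1`) satisfy
`R(0, t) = 0` for `t > 0` and the Pascal-type recursion `R(j+1, t+1) = R(j, t+1) + R(j+k+1, t)`,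
the coefficientwise form of `C^(j+1) = C^j + z C^(j+k+1)`. A double induction on `t` and `j`
turns these rules into the convolution law `R(m, ·) * R(j, ·) = R(m + j, ·)`. Since `R(1, ·)` is
the sequence of `k`-Catalan numbers, `R(j, ·)` is the coefficient sequence of `C^j`.
-/

open PowerSeries Finset

namespace KCatalan

/-- The Raney numbers with parameters `(k + 1, j)`, written without truncated subtraction:
for `t + 1` the binomial is `((k+1)(t+1) + j - 1 choose t)`. -/
noncomputable def raney (k j : ℕ) : ℕ → ℚ
  | 0 => 1
  | t + 1 => j / (t + 1) * ((k * (t + 1) + t + j).choose t)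

noncomputable def series (k : ℕ) : ℚ⟦X⟧ :=
  mk fun n => ((k + 1) * n).choose n / (k * n + 1)

variable (k : ℕ)

@[simp]
lemma raney_zero_right (j : ℕ) : raney k j 0 = 1 := rfl

@[simp]
lemma raney_zero_succ (t : ℕ) : raney k 0 (t + 1) = 0 := by
  simp [raney]

lemma raney_succ_succ (j t : ℕ) :
    raney k (j + 1) (t + 1) = raney k j (t + 1) + raney k (j + 1 + k) t := by
  cases t with
  | zero => simp [raney]
  | succ s =>
    set M := k * (s + 2) + s + 1 + j
    have hLHS : k * (s + 1 + 1) + (s + 1) + (j + 1) = M + 1 := by ring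
    have hRHS₁ : k * (s + 1 + 1) + (s + 1) + j = M := by ring
    have hRHS₂ : k * (s + 1) + s + (j + 1 + k) = M := by ring
    have absorb : (M.choose (s + 1) : ℚ) * (s + 1) = M.choose s * (k * (s + 2) + 1 + j) := by
      have h := Nat.choose_succ_right_eq M s
      rw [show M - s = k * (s + 2) + 1 + j by omega] at h
      exact_mod_cast h
    simp only [raney, hLHS, hRHS₁, hRHS₂, Nat.choose_succ_succ', Nat.cast_add, Nat.cast_one]
    field_simp
    linear_combination absorb

lemma sum_antidiagonal_raney_mul_raney (t : ℕ) :
    ∀ m j : ℕ, ∑ p ∈ antidiagonal t, raney k m p.1 * raney k j p.2 = raney k (m + j) t := by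
  induction t with
  | zero => simp
  | succ t iht =>
    intro m j
    induction m with
    | zero => simp [Nat.sum_antidiagonal_succ]
    | succ m ihm =>
      have shifted : ∑ p ∈ antidiagonal t, raney k m (p.1 + 1) * raney k j p.2
          = raney k (m + j) (t + 1) - raney k j (t + 1) := by
        rw [← ihm, Nat.sum_antidiagonal_succ]
        simp
      calc ∑ p ∈ antidiagonal (t + 1), raney k (m + 1) p.1 * raney k j p.2
          = raney k j (t + 1) + ∑ p ∈ antidiagonal t, raney k m (p.1 + 1) * raney k j p.2
              + ∑ p ∈ antidiagonal t, raney k (m + 1 + k) p.1 * raney k j p.2 := by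
            simp only [Nat.sum_antidiagonal_succ, raney_succ_succ, add_mul, sum_add_distrib,
              raney_zero_right, one_mul, add_assoc]
        _ = raney k (m + j) (t + 1) + raney k (m + j + 1 + k) t := by
            rw [shifted, iht]
            ring_nf
        _ = raney k (m + 1 + j) (t + 1) := by
            rw [show m + 1 + j = m + j + 1 by ring, raney_succ_succ]

lemma coeff_series (t : ℕ) : coeff t (series k) = raney k 1 t := by
  rw [series, coeff_mk]
  cases t with
  | zero => simp
  | succ s =>
    set P := k * (s + 1) + s + 1
    have hP : (k + 1) * (s + 1) = P := by ring
    have absorb : (P.choose (s + 1) : ℚ) * (s + 1) = P.choose s * (k * (s + 1) + 1) := by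
      have h := Nat.choose_succ_right_eq P s
      rw [show P - s = k * (s + 1) + 1 by omega] at h
      exact_mod_cast h
    simp only [raney, hP, Nat.cast_one, Nat.cast_add]
    field_simp
    linear_combination absorb

lemma coeff_series_pow (j t : ℕ) : coeff t (series k ^ j) = raney k j t := by
  induction j generalizing t with
  | zero => cases t <;> simp [coeff_one]
  | succ j ih =>
    simp only [pow_succ, coeff_mul, ih, coeff_series, sum_antidiagonal_raney_mul_raney]

end KCatalan

theorem stmt3_general (k j t : ℕ) (ht : 0 < t) :
    PowerSeries.coeff (R := ℚ) t
        ((PowerSeries.mk (fun n => (Nat.choose ((k + 1) * n) n : ℚ) / (k * n + 1))) ^ j)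
      = (j : ℚ) / (t : ℚ) * (Nat.choose ((k + 1) * t + j - 1) (t - 1) : ℚ) := by
  obtain ⟨s, rfl⟩ := Nat.exists_eq_add_of_lt ht
  have hbinom : (k + 1) * (0 + s + 1) + j - 1 = k * (s + 1) + s + j := by
    rw [show (k + 1) * (0 + s + 1) = k * (s + 1) + s + 1 by ring]
    omega
  rw [← KCatalan.series, KCatalan.coeff_series_pow, hbinom]
  simp [KCatalan.raney]

/-- **Coefficients of powers of the k-Catalan generating function.**
Let `C(z) = Σ_{n≥0} (1/(kn+1)) * ((k+1)n choose n) * z^n` (a formal power series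
over `ℚ`).  For positive integers `j` and `t`, the coefficient of `z^t` in `C(z)^j`
is `(j/t) * ((k+1)t + j - 1 choose t - 1)`. -/
theorem stmt3 (k j t : ℕ) (hj : 0 < j) (ht : 0 < t) :
    PowerSeries.coeff (R := ℚ) t
        ((PowerSeries.mk (fun n => (Nat.choose ((k + 1) * n) n : ℚ) / (k * n + 1))) ^ j)
      = (j : ℚ) / (t : ℚ) * (Nat.choose ((k + 1) * t + j - 1) (t - 1) : ℚ) :=
  stmt3_general k j t ht
end

section
/- Let P and Q be lattice paths from (0,0) to (m,r) using East and North steps, with P never going above Q. Let l_1 < ... < l_r be the positions (indices in [m+r]) of the North steps of Q and u_1 < ... < u_r the positions of the North steps of P, and let N_i = [l_i, u_i] ⊆ [m+r]. Then a subset B of [m+r] with |B| = r is a transversal of the set system (N_1, ..., N_r) if and only if, writing B = {b_1 < b_2 < ... < b_r}, we have l_i ≤ b_i ≤ u_i for every i. -/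
lemma aux_le (r : ℕ) (g : Fin r → Fin r) (hg : Function.Injective g) (i : Fin r) :
    ∃ k, k ≤ i ∧ i ≤ g k := by
  by_contra h
  push_neg at h
  have hsub : (Finset.Iic i).image g ⊆ Finset.Iio i := by
    intro x hx
    obtain ⟨k, hk, rfl⟩ := Finset.mem_image.mp hx
    exact Finset.mem_Iio.mpr (h k (Finset.mem_Iic.mp hk))
  have := Finset.card_le_card hsub
  rw [Finset.card_image_of_injective _ hg, Fin.card_Iic, Fin.card_Iio] at this
  omega

lemma aux_ge (r : ℕ) (g : Fin r → Fin r) (hg : Function.Injective g) (i : Fin r) :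
    ∃ k, i ≤ k ∧ g k ≤ i := by
  by_contra h
  push_neg at h
  have hsub : (Finset.Ici i).image g ⊆ Finset.Ioi i := by
    intro x hx
    obtain ⟨k, hk, rfl⟩ := Finset.mem_image.mp hx
    exact Finset.mem_Ioi.mpr (h k (Finset.mem_Ici.mp hk))
  have := Finset.card_le_card hsub
  rw [Finset.card_image_of_injective _ hg, Fin.card_Ici, Fin.card_Ioi] at this
  have := i.isLt
  omega

/-- **Bases of a lattice path matroid are the lattice paths between P and Q.**
Paths from `(0,0)` to `(m,r)` are encoded by the sets of positions (in `[1, m+r]`)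
of their North steps: `Q` (upper path, North positions `l_1 < ... < l_r`) and `P`
(lower path, North positions `u_1 < ... < u_r`), with `P` never above `Q`
(the prefix counts of North steps of `P` never exceed those of `Q`).
A set `B ⊆ [1, m+r]` with `|B| = r` is a transversal of the interval system
`(N_i = [l_i, u_i])_{i ∈ [r]}` — i.e. there is an injection `f : Fin r ↪ ℕ`
with `l_i ≤ f i ≤ u_i` whose image is `B` — if and only if the `i`-th smallest
element `b_i` of `B` satisfies `l_i ≤ b_i ≤ u_i` for every `i`, i.e. the lattice
path with North steps at the positions of `B` stays in the region bounded by
`P` and `Q`. -/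
theorem stmt4 (m r : ℕ) (P Q B : Finset ℕ)
    (hPs : P ⊆ Finset.Icc 1 (m + r)) (hQs : Q ⊆ Finset.Icc 1 (m + r))
    (hP : P.card = r) (hQ : Q.card = r)
    (hPQ : ∀ p ≤ m + r, (P.filter (· ≤ p)).card ≤ (Q.filter (· ≤ p)).card)
    (hBs : B ⊆ Finset.Icc 1 (m + r)) (hB : B.card = r) :
    (∃ f : Fin r ↪ ℕ,
        (∀ i : Fin r, ((Q.orderIsoOfFin hQ i : ℕ) ≤ f i ∧ f i ≤ (P.orderIsoOfFin hP i : ℕ))) ∧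
        Finset.univ.map f = B)
      ↔ ∀ i : Fin r, (Q.orderIsoOfFin hQ i : ℕ) ≤ (B.orderIsoOfFin hB i : ℕ) ∧
          (B.orderIsoOfFin hB i : ℕ) ≤ (P.orderIsoOfFin hP i : ℕ) := by
  set l : Fin r → ℕ := fun i => (Q.orderIsoOfFin hQ i : ℕ) with hl
  set u : Fin r → ℕ := fun i => (P.orderIsoOfFin hP i : ℕ) with hu
  set b : Fin r → ℕ := fun i => (B.orderIsoOfFin hB i : ℕ) with hb
  have lmono : Monotone l := fun i j h => (Q.orderIsoOfFin hQ).monotone h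
  have umono : Monotone u := fun i j h => (P.orderIsoOfFin hP).monotone h
  have bmono : Monotone b := fun i j h => (B.orderIsoOfFin hB).monotone h
  have bstrict : StrictMono b := fun i j h =>
    show ((B.orderIsoOfFin hB i : B) : ℕ) < _ from (B.orderIsoOfFin hB).strictMono h
  constructor
  · rintro ⟨f, hf, hfB⟩
    -- every f i is in B
    have hmem : ∀ i, f i ∈ B := fun i => by
      rw [← hfB]; exact Finset.mem_map_of_mem f (Finset.mem_univ i)
    set g : Fin r → Fin r := fun i => (B.orderIsoOfFin hB).symm ⟨f i, hmem i⟩ with hg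
    have hbg : ∀ i, b (g i) = f i := fun i => by
      show ((B.orderIsoOfFin hB) ((B.orderIsoOfFin hB).symm ⟨f i, hmem i⟩) : ℕ) = f i
      rw [OrderIso.apply_symm_apply]
    have hginj : Function.Injective g := by
      intro i j hij
      apply f.injective
      rw [← hbg i, ← hbg j, hij]
    intro i
    constructor
    · obtain ⟨k, hik, hgk⟩ := aux_ge r g hginj i
      calc l i ≤ l k := lmono hik
        _ ≤ f k := (hf k).1
        _ = b (g k) := (hbg k).symm
        _ ≤ b i := bmono hgk
    · obtain ⟨k, hki, hgk⟩ := aux_le r g hginj i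
      calc b i ≤ b (g k) := bmono hgk
        _ = f k := hbg k
        _ ≤ u k := (hf k).2
        _ ≤ u i := umono hki
  · intro h
    refine ⟨⟨b, bstrict.injective⟩, fun i => h i, ?_⟩
    apply Finset.eq_of_subset_of_card_le
    · intro x hx
      obtain ⟨i, _, rfl⟩ := Finset.mem_map.mp hx
      exact (B.orderIsoOfFin hB i).2
    · simp [hB]
end

section
/- Let P and Q be lattice paths from (0,0) to (m,r) with P never going above Q, and let M[P,Q] be the associated lattice path matroid (the transversal matroid on [m+r] with presentation (N_i = [l_i, u_i] : i ∈ [r])). Then the number of bases of M[P,Q] equals the number of lattice paths from (0,0) to (m,r) that go neither below P nor above Q. -/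
/-!
List the elements of an `r`-set in increasing order. A matching `f` of the intervals
`[l_i, u_i]` can be replaced by the sorted enumeration `b` of its image, and for monotone
sequences the pointwise inequality `g ≤ h` is equivalent to the reverse inequality
`#{i | h i ≤ a} ≤ #{i | g i ≤ a}` of their counting functions. Hence `B` is a basis exactly
when its North-step counts `#{x ∈ B | x ≤ a}` lie between those of `P` and `Q`, that is,
when `B` is the set of North steps of a lattice path between `P` and `Q`.
-/

/-- `B` is a transversal of the interval system `(N_j = [lo j, hi j])_{j : Fin r}`:
there is an injection `f : Fin r ↪ ℕ` with `lo j ≤ f j ≤ hi j` whose image is `B`. -/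
def IsTransLH (r : ℕ) (lo hi : Fin r → ℕ) (B : Finset ℕ) : Prop :=
  ∃ f : Fin r ↪ ℕ, (∀ j : Fin r, lo j ≤ f j ∧ f j ≤ hi j) ∧ Finset.univ.map f = B

open Finset

section CountBelow

variable {α : Type*} [Preorder α] [DecidableLE α]

lemma card_filter_le_le_card_filter_le {ι : Type*} [Fintype ι] {f g : ι → α}
    (hfg : ∀ i, f i ≤ g i) (a : α) : #{i | g i ≤ a} ≤ #{i | f i ≤ a} :=
  card_le_card <| monotone_filter_right _ fun i _ => (hfg i).trans

lemma Monotone.lt_card_filter_le_iff {n : ℕ} {f : Fin n → α} (hf : Monotone f) (i : Fin n)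
    (a : α) : (i : ℕ) < #{j | f j ≤ a} ↔ f i ≤ a := by
  constructor
  · intro hi
    by_contra hia
    have hsub : ({j | f j ≤ a} : Finset (Fin n)) ⊆ Iio i := fun j hj => by
      simp only [mem_filter, mem_univ, true_and] at hj
      exact mem_Iio.2 <| lt_of_not_ge fun hij => hia ((hf hij).trans hj)
    exact absurd ((card_le_card hsub).trans_eq (Fin.card_Iio i)) (not_le.2 hi)
  · intro hia
    have hsub : Iic i ⊆ ({j | f j ≤ a} : Finset (Fin n)) := fun j hj =>
      mem_filter.2 ⟨mem_univ j, (hf (mem_Iic.1 hj)).trans hia⟩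
    exact Nat.lt_of_succ_le <| (Fin.card_Iic i).symm.trans_le (card_le_card hsub)

lemma Monotone.forall_le_iff_forall_card_filter_le {n : ℕ} {f g : Fin n → α} (hf : Monotone f)
    (hg : Monotone g) : (∀ i, f i ≤ g i) ↔ ∀ a, #{i | g i ≤ a} ≤ #{i | f i ≤ a} := by
  refine ⟨card_filter_le_le_card_filter_le, fun h i => ?_⟩
  have hgi : (i : ℕ) < #{j | g j ≤ g i} := (hg.lt_card_filter_le_iff i (g i)).2 le_rfl
  exact (hf.lt_card_filter_le_iff i (g i)).1 (hgi.trans_le (h (g i)))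

end CountBelow

lemma Finset.card_filter_map_univ {ι β : Type*} [Fintype ι] (f : ι ↪ β) (q : β → Prop)
    [DecidablePred q] :
    #{x ∈ univ.map f | q x} = #{i | q (f i)} := by
  rw [filter_map, card_map]
  rfl

lemma Finset.card_filter_le_eq_card_filter_orderEmbOfFin_le {α : Type*} [LinearOrder α]
    {n : ℕ} (s : Finset α) (hs : #s = n) (a : α) :
    #{x ∈ s | x ≤ a} = #{i | s.orderEmbOfFin hs i ≤ a} := by
  conv_lhs => rw [← s.map_orderEmbOfFin_univ hs]
  exact card_filter_map_univ _ _

lemma isTransLH_orderEmbOfFin_iff {r : ℕ} {P Q B : Finset ℕ} (hP : #P = r) (hQ : #Q = r)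
    (hB : #B = r) :
    IsTransLH r (Q.orderEmbOfFin hQ) (P.orderEmbOfFin hP) B ↔
      ∀ a, #{x ∈ P | x ≤ a} ≤ #{x ∈ B | x ≤ a} ∧ #{x ∈ B | x ≤ a} ≤ #{x ∈ Q | x ≤ a} := by
  simp only [P.card_filter_le_eq_card_filter_orderEmbOfFin_le hP,
    Q.card_filter_le_eq_card_filter_orderEmbOfFin_le hQ]
  constructor
  · rintro ⟨f, hf, rfl⟩ a
    rw [card_filter_map_univ]
    exact ⟨card_filter_le_le_card_filter_le (fun i => (hf i).2) a,
      card_filter_le_le_card_filter_le (fun i => (hf i).1) a⟩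
  · intro h
    simp only [B.card_filter_le_eq_card_filter_orderEmbOfFin_le hB, forall_and] at h
    have hp := (B.orderEmbOfFin hB).monotone.forall_le_iff_forall_card_filter_le
      (P.orderEmbOfFin hP).monotone
    have hq := (Q.orderEmbOfFin hQ).monotone.forall_le_iff_forall_card_filter_le
      (B.orderEmbOfFin hB).monotone
    exact ⟨(B.orderEmbOfFin hB).toEmbedding, fun i => ⟨hq.2 h.2 i, hp.2 h.1 i⟩,
      B.map_orderEmbOfFin_univ hB⟩

lemma subset_Icc_of_forall_card_filter_le {n : ℕ} {P Q B : Finset ℕ} (hP : P ⊆ Icc 1 n)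
    (hQ : Q ⊆ Icc 1 n) (hB : #B = #P)
    (h : ∀ a, #{x ∈ P | x ≤ a} ≤ #{x ∈ B | x ≤ a} ∧ #{x ∈ B | x ≤ a} ≤ #{x ∈ Q | x ≤ a}) :
    B ⊆ Icc 1 n := by
  have hpos : ∀ x ∈ B, ¬x ≤ 0 := by
    have hQ0 : #{x ∈ Q | x ≤ 0} = 0 :=
      card_filter_eq_zero_iff.2 fun x hx => not_le.2 (mem_Icc.1 (hQ hx)).1
    exact card_filter_eq_zero_iff.1 (Nat.eq_zero_of_le_zero ((h 0).2.trans_eq hQ0))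
  have hle : ∀ x ∈ B, x ≤ n := by
    have hPn : #{x ∈ P | x ≤ n} = #P :=
      card_filter_eq_iff.2 fun x hx => (mem_Icc.1 (hP hx)).2
    exact card_filter_eq_iff.1 <|
      (card_filter_le _ _).antisymm (hB.trans_le (hPn.symm.trans_le (h n).1))
  exact fun x hx => mem_Icc.2 ⟨Nat.pos_of_ne_zero fun h0 => hpos x hx h0.le, hle x hx⟩

theorem stmt5_general (m r : ℕ) (P Q : Finset ℕ)
    (hPs : P ⊆ Finset.Icc 1 (m + r)) (hQs : Q ⊆ Finset.Icc 1 (m + r))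
    (hP : P.card = r) (hQ : Q.card = r) :
    Nat.card {B : Finset ℕ // B.card = r ∧
        IsTransLH r (fun i => (Q.orderIsoOfFin hQ i : ℕ)) (fun i => (P.orderIsoOfFin hP i : ℕ)) B}
      = Nat.card {B : Finset ℕ // B ⊆ Finset.Icc 1 (m + r) ∧ B.card = r ∧
          ∀ p ≤ m + r, (P.filter (· ≤ p)).card ≤ (B.filter (· ≤ p)).card ∧
            (B.filter (· ≤ p)).card ≤ (Q.filter (· ≤ p)).card} := by
  refine Nat.card_congr (Equiv.subtypeEquivRight fun B => ?_)
  simp only [coe_orderIsoOfFin_apply]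
  constructor
  · rintro ⟨hB, hT⟩
    have hcount := (isTransLH_orderEmbOfFin_iff hP hQ hB).1 hT
    exact ⟨subset_Icc_of_forall_card_filter_le hPs hQs (hB.trans hP.symm) hcount, hB,
      fun a _ => hcount a⟩
  · rintro ⟨hBs, hB, hcount⟩
    refine ⟨hB, (isTransLH_orderEmbOfFin_iff hP hQ hB).2 fun a => ?_⟩
    obtain ha | ha := le_or_gt a (m + r)
    · exact hcount a ha
    · have hfull : ∀ S ⊆ Icc 1 (m + r), #{x ∈ S | x ≤ a} = #S := fun S hS =>
        card_filter_eq_iff.2 fun x hx => (mem_Icc.1 (hS hx)).2.trans ha.le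
      rw [hfull P hPs, hfull B hBs, hfull Q hQs, hP, hQ, hB]
      exact ⟨le_rfl, le_rfl⟩

/-- **Counting bases of a lattice path matroid by lattice paths.**
Let `P` (lower) and `Q` (upper) be lattice paths from `(0,0)` to `(m,r)`, encoded by
their sets of North-step positions in `[1, m+r]`, with `P` never going above `Q`.
The bases of the lattice path matroid `M[P,Q]` are the `r`-element transversals of
the interval system `N_i = [l_i, u_i]` where `l_i`, `u_i` are the positions of the
`i`-th North steps of `Q` and `P`.  Their number equals the number of lattice paths
from `(0,0)` to `(m,r)` (sets `B` of North positions with `|B| = r`) that go neither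
below `P` nor above `Q`, i.e. whose prefix North-counts lie between those of `P`
and `Q`. -/
theorem stmt5 (m r : ℕ) (P Q : Finset ℕ)
    (hPs : P ⊆ Finset.Icc 1 (m + r)) (hQs : Q ⊆ Finset.Icc 1 (m + r))
    (hP : P.card = r) (hQ : Q.card = r)
    (hPQ : ∀ p ≤ m + r, (P.filter (· ≤ p)).card ≤ (Q.filter (· ≤ p)).card) :
    Nat.card {B : Finset ℕ // B.card = r ∧
        IsTransLH r (fun i => (Q.orderIsoOfFin hQ i : ℕ)) (fun i => (P.orderIsoOfFin hP i : ℕ)) B}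
      = Nat.card {B : Finset ℕ // B ⊆ Finset.Icc 1 (m + r) ∧ B.card = r ∧
          ∀ p ≤ m + r, (P.filter (· ≤ p)).card ≤ (B.filter (· ≤ p)).card ∧
            (B.filter (· ≤ p)).card ≤ (Q.filter (· ≤ p)).card} :=
  stmt5_general m r P Q hPs hQs hP hQ
end

section
/- The class of lattice path matroids is closed under matroid duality: if M = M[P,Q] is a lattice path matroid, then the dual matroid M* (whose bases are the complements in [m+r] of the bases of M) is isomorphic to a lattice path matroid, namely the one obtained by reflecting the bounding paths P and Q about the line y = x. -/
/-- `M` is the lattice path matroid `M[P,Q]` on ground set `[1, m+r]`: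
`P` (lower) and `Q` (upper) are encoded by their North-step position sets,
`P` never goes above `Q`, and the bases of `M` are exactly the `r`-element
transversals of the interval system determined by `P` and `Q`. -/
def IsLPMPres (m r : ℕ) (P Q : Finset ℕ) (M : Matroid ℕ) : Prop :=
  ∃ (hP : P.card = r) (hQ : Q.card = r),
    P ⊆ Finset.Icc 1 (m + r) ∧ Q ⊆ Finset.Icc 1 (m + r) ∧
    (∀ p ≤ m + r, (P.filter (· ≤ p)).card ≤ (Q.filter (· ≤ p)).card) ∧
    M.E = ↑(Finset.Icc 1 (m + r)) ∧
    ∀ B : Finset ℕ, M.IsBase ↑B ↔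
      IsTransLH r (fun i => (Q.orderIsoOfFin hQ i : ℕ)) (fun i => (P.orderIsoOfFin hP i : ℕ)) B

/-! Encode a lattice path by the positions of its North steps, so that the height of the path
with North steps `B` after `p` steps is `#{x ∈ B | x ≤ p}`. Since the intervals of `M[P,Q]` have
monotone endpoints, a set is a transversal exactly when its sorted enumeration lies between the
sorted enumerations of `Q` and `P`, i.e. when its path lies between the paths `P` and `Q`.
Complementation in `[1, n]` swaps North and East steps and turns the height `h` after `p ≤ n`
steps into `p - h`, reversing the order between paths; so `B` is a basis of `M✶`, i.e. its
complement lies between `P` and `Q`, exactly when `B` lies between the complements of `Q` and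
`P`. -/

open Finset

section Counting

variable {α : Type*} [LinearOrder α] {r : ℕ}

theorem Monotone.le_iff_lt_card_filter {g : Fin r → α} (hg : Monotone g) (i : Fin r) (p : α) :
    g i ≤ p ↔ (i : ℕ) < #{j | g j ≤ p} := by
  constructor
  · intro hi
    have hsub : Iic i ⊆ ({j | g j ≤ p} : Finset (Fin r)) := fun j hj => by
      simpa using (hg (mem_Iic.1 hj)).trans hi
    simpa using card_le_card hsub
  · contrapose!
    intro hi
    have hsub : ({j | g j ≤ p} : Finset (Fin r)) ⊆ Iio i := fun j hj => by
      simp only [mem_filter, mem_univ, true_and] at hj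
      exact mem_Iio.2 (lt_of_not_ge fun hij => (hi.trans_le (hg hij)).not_ge hj)
    simpa using card_le_card hsub

theorem Monotone.le_of_card_filter_le {g h : Fin r → α} (hg : Monotone g) (hh : Monotone h)
    (hcount : ∀ p, #{j | h j ≤ p} ≤ #{j | g j ≤ p}) (i : Fin r) : g i ≤ h i :=
  (hg.le_iff_lt_card_filter i _).2 <|
    ((hh.le_iff_lt_card_filter i (h i)).1 le_rfl).trans_le (hcount _)

theorem card_filter_le_le_of_le {g h : Fin r → α} (hgh : ∀ i, g i ≤ h i) (p : α) :
    #{j | h j ≤ p} ≤ #{j | g j ≤ p} :=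
  card_le_card fun j => by simpa using (hgh j).trans

theorem card_filter_map_univ_le (f : Fin r ↪ α) (p : α) :
    #{x ∈ univ.map f | x ≤ p} = #{j | f j ≤ p} := by
  rw [filter_map, card_map]
  rfl

theorem card_filter_orderEmbOfFin_le (S : Finset α) (h : #S = r) (p : α) :
    #{j | S.orderEmbOfFin h j ≤ p} = #{x ∈ S | x ≤ p} := by
  conv_rhs => rw [← map_orderEmbOfFin_univ S h]
  exact (card_filter_map_univ_le _ p).symm

end Counting

section Transversal

variable {r : ℕ}

theorem isTransLH_iff {lo hi : Fin r → ℕ} (hlo : Monotone lo) (hhi : Monotone hi) (B : Finset ℕ) :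
    IsTransLH r lo hi B ↔ #B = r ∧
      ∀ p, #{j | hi j ≤ p} ≤ #{x ∈ B | x ≤ p} ∧ #{x ∈ B | x ≤ p} ≤ #{j | lo j ≤ p} := by
  constructor
  · rintro ⟨f, hf, rfl⟩
    refine ⟨by simp, fun p => ?_⟩
    rw [card_filter_map_univ_le]
    exact ⟨card_filter_le_le_of_le (fun j => (hf j).2) p,
      card_filter_le_le_of_le (fun j => (hf j).1) p⟩
  · rintro ⟨hB, hcount⟩
    have hs := (B.orderEmbOfFin hB).monotone
    refine ⟨(B.orderEmbOfFin hB).toEmbedding, fun j => ⟨?_, ?_⟩, map_orderEmbOfFin_univ B hB⟩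
    · exact hlo.le_of_card_filter_le hs
        (fun p => (card_filter_orderEmbOfFin_le B hB p).trans_le (hcount p).2) j
    · exact hs.le_of_card_filter_le hhi
        (fun p => ((hcount p).1).trans_eq (card_filter_orderEmbOfFin_le B hB p).symm) j

theorem IsTransLH.subset_Icc {lo hi : Fin r → ℕ} {B : Finset ℕ} {a b : ℕ}
    (hB : IsTransLH r lo hi B) (hlo : ∀ j, a ≤ lo j) (hhi : ∀ j, hi j ≤ b) : B ⊆ Icc a b := by
  obtain ⟨f, hf, rfl⟩ := hB
  intro x hx
  obtain ⟨j, -, rfl⟩ := mem_map.1 hx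
  exact mem_Icc.2 ⟨(hlo j).trans (hf j).1, (hf j).2.trans (hhi j)⟩

end Transversal

section Complement

variable {n : ℕ} {X : Finset ℕ}

theorem card_Icc_sdiff_add_card (hX : X ⊆ Icc 1 n) : #(Icc 1 n \ X) + #X = n := by
  rw [card_sdiff_add_card_eq_card hX, Nat.card_Icc, Nat.add_sub_cancel]

theorem card_filter_Icc_sdiff_add_card_filter (hX : X ⊆ Icc 1 n) (p : ℕ) :
    #{x ∈ Icc 1 n \ X | x ≤ p} + #{x ∈ X | x ≤ p} = min p n := by
  have hsdiff : {x ∈ Icc 1 n \ X | x ≤ p} = Icc 1 (min p n) \ {x ∈ X | x ≤ p} := by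
    ext x
    simp only [mem_filter, mem_sdiff, mem_Icc, le_min_iff]
    grind
  have hsub : {x ∈ X | x ≤ p} ⊆ Icc 1 (min p n) := fun x hx => by
    have := hX (mem_filter.1 hx).1
    simp only [mem_filter, mem_Icc, le_min_iff] at hx this ⊢
    omega
  rw [hsdiff, card_sdiff_add_card_eq_card hsub, Nat.card_Icc, Nat.add_sub_cancel]

end Complement

def IsBetweenPaths (P Q B : Finset ℕ) : Prop :=
  ∀ p, #{x ∈ P | x ≤ p} ≤ #{x ∈ B | x ≤ p} ∧ #{x ∈ B | x ≤ p} ≤ #{x ∈ Q | x ≤ p}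

theorem isTransLH_orderIsoOfFin_iff {r : ℕ} {P Q : Finset ℕ} (hP : #P = r) (hQ : #Q = r)
    (B : Finset ℕ) :
    IsTransLH r (fun i => (Q.orderIsoOfFin hQ i : ℕ)) (fun i => (P.orderIsoOfFin hP i : ℕ)) B ↔
      #B = r ∧ IsBetweenPaths P Q B := by
  simp only [coe_orderIsoOfFin_apply]
  rw [isTransLH_iff (Q.orderEmbOfFin hQ).monotone (P.orderEmbOfFin hP).monotone]
  simp only [card_filter_orderEmbOfFin_le, IsBetweenPaths]

theorem isBetweenPaths_Icc_sdiff_iff {n : ℕ} {P Q B : Finset ℕ} (hP : P ⊆ Icc 1 n)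
    (hQ : Q ⊆ Icc 1 n) (hB : B ⊆ Icc 1 n) :
    IsBetweenPaths P Q (Icc 1 n \ B) ↔ IsBetweenPaths (Icc 1 n \ Q) (Icc 1 n \ P) B := by
  refine forall_congr' fun p => ?_
  have := card_filter_Icc_sdiff_add_card_filter hP p
  have := card_filter_Icc_sdiff_add_card_filter hQ p
  have := card_filter_Icc_sdiff_add_card_filter hB p
  omega

/-- **Lattice path matroids are closed under duality.**  If `M = M[P,Q]` is a lattice
path matroid, then its dual `M✶` (whose bases are the complements of the bases of `M`)
is again a lattice path matroid, namely the one obtained by reflecting the bounding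
paths about the line `y = x`: reflecting swaps East and North steps, so the reflected
region is bounded below by the reflection of `Q` (North positions `[1,m+r] \ Q`) and
above by the reflection of `P` (North positions `[1,m+r] \ P`), and it goes from
`(0,0)` to `(r,m)`. -/
theorem stmt6 (m r : ℕ) (P Q : Finset ℕ) (M : Matroid ℕ)
    (h : IsLPMPres m r P Q M) :
    IsLPMPres r m (Finset.Icc 1 (m + r) \ Q) (Finset.Icc 1 (m + r) \ P) M✶ := by
  obtain ⟨hP, hQ, hPE, hQE, hPQ, hE, hBase⟩ := h
  have hP' : #(Icc 1 (m + r) \ Q) = m := by have := card_Icc_sdiff_add_card hQE; omega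
  have hQ' : #(Icc 1 (m + r) \ P) = m := by have := card_Icc_sdiff_add_card hPE; omega
  rw [IsLPMPres, Nat.add_comm r m]
  refine ⟨hP', hQ', sdiff_subset, sdiff_subset, fun p hp => ?_, by rw [Matroid.dual_ground, hE],
    fun B => ?_⟩
  · have := card_filter_Icc_sdiff_add_card_filter hPE p
    have := card_filter_Icc_sdiff_add_card_filter hQE p
    have := hPQ p hp
    omega
  rw [Matroid.dual_isBase_iff', hE, ← coe_sdiff, hBase, coe_subset]
  constructor
  · rintro ⟨hB, hBE⟩
    rw [isTransLH_orderIsoOfFin_iff] at hB ⊢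
    have := card_Icc_sdiff_add_card hBE
    exact ⟨by omega, (isBetweenPaths_Icc_sdiff_iff hPE hQE hBE).1 hB.2⟩
  · intro hB
    have hBE := hB.subset_Icc (fun j => (mem_Icc.1 (sdiff_subset (orderIsoOfFin _ hQ' j).2)).1)
      (fun j => (mem_Icc.1 (sdiff_subset (orderIsoOfFin _ hP' j).2)).2)
    rw [isTransLH_orderIsoOfFin_iff] at hB ⊢
    have := card_Icc_sdiff_add_card hBE
    exact ⟨⟨by omega, (isBetweenPaths_Icc_sdiff_iff hPE hQE hBE).2 hB.2⟩, hBE⟩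
end

section
/- Let M[P,Q] be a lattice path matroid with bounding paths P and Q from (0,0) to (m,r). Then M[P,Q] is a connected matroid if and only if the paths P and Q intersect only at the points (0,0) and (m,r). -/
/-- `M` is a direct sum of two nonempty matroids: for some set `X` with both `X`
and `M.E \ X` nonempty, the bases of `M` are exactly the unions of a base of the
restriction `M ↾ X` and a base of `M ↾ (M.E \ X)`. -/
def IsDirectSumDecomposable (M : Matroid ℕ) : Prop :=
  ∃ X : Set ℕ, X ⊆ M.E ∧ X.Nonempty ∧ (M.E \ X).Nonempty ∧
    ∀ B : Set ℕ, M.IsBase B ↔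
      ∃ B₁ B₂ : Set ℕ, (M.restrict X).IsBase B₁ ∧ (M.restrict (M.E \ X)).IsBase B₂ ∧ B = B₁ ∪ B₂

namespace Finset

variable {α : Type*} [LinearOrder α] {s t : Finset α} {k : ℕ}

lemma orderEmbOfFin_le_iff (h : #s = k) (i : Fin k) (a : α) :
    s.orderEmbOfFin h i ≤ a ↔ (i : ℕ) < #{x ∈ s | x ≤ a} := by
  constructor
  · intro hia
    have := card_le_card_of_injOn (s := Iic i) (t := {x ∈ s | x ≤ a}) (s.orderEmbOfFin h)
      (fun j hj ↦ mem_filter.2 ⟨s.orderEmbOfFin_mem h j,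
        ((s.orderEmbOfFin h).monotone (mem_Iic.1 hj)).trans hia⟩)
      (s.orderEmbOfFin h).injective.injOn
    rwa [Fin.card_Iic] at this
  · intro hi
    by_contra! hai
    have hsub : {x ∈ s | x ≤ a} ⊆ (Iio i).map (s.orderEmbOfFin h).toEmbedding := by
      intro x hx
      obtain ⟨hxs, hxa⟩ := mem_filter.1 hx
      obtain ⟨j, rfl⟩ : x ∈ Set.range (s.orderEmbOfFin h) := by
        rwa [range_orderEmbOfFin]
      exact mem_map_of_mem _ (mem_Iio.2 ((s.orderEmbOfFin h).lt_iff_lt.1 (hxa.trans_lt hai)))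
    have := card_le_card hsub
    rw [card_map, Fin.card_Iio] at this
    omega

lemma orderEmbOfFin_le_orderEmbOfFin (hs : #s = k) (ht : #t = k)
    (h : ∀ a ∈ s, #{x ∈ s | x ≤ a} ≤ #{x ∈ t | x ≤ a}) (i : Fin k) :
    t.orderEmbOfFin ht i ≤ s.orderEmbOfFin hs i := by
  rw [orderEmbOfFin_le_iff]
  exact ((orderEmbOfFin_le_iff hs i _).1 le_rfl).trans_le (h _ (s.orderEmbOfFin_mem hs i))

lemma lt_orderEmbOfFin_of_card_filter_le (hs : #s = k) (ht : #t = k) {a : α}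
    (h : #{x ∈ t | x ≤ a} ≤ #{x ∈ s | x ≤ a}) {i : Fin k} (hi : a < s.orderEmbOfFin hs i) :
    a < t.orderEmbOfFin ht i := by
  rw [← not_le, orderEmbOfFin_le_iff] at hi ⊢
  omega

lemma exists_orderEmbOfFin_le_lt (hs : #s = k) (ht : #t = k) {a : α}
    (h : #{x ∈ s | x ≤ a} < #{x ∈ t | x ≤ a}) :
    ∃ j, t.orderEmbOfFin ht j ≤ a ∧ a < s.orderEmbOfFin hs j := by
  have hk : #{x ∈ s | x ≤ a} < k := h.trans_le (ht ▸ card_filter_le _ _)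
  refine ⟨⟨_, hk⟩, (orderEmbOfFin_le_iff ht _ a).2 h, ?_⟩
  rw [← not_le, orderEmbOfFin_le_iff]
  exact lt_irrefl _

lemma Icc_orderEmbOfFin_subset_or_disjoint (hs : #s = k) (ht : #t = k) {a b : α}
    (hb : ∀ x ∈ t, b ≤ x) (h : #{x ∈ t | x ≤ a} ≤ #{x ∈ s | x ≤ a}) (i : Fin k) :
    Set.Icc (t.orderEmbOfFin ht i) (s.orderEmbOfFin hs i) ⊆ Set.Icc b a ∨
      Disjoint (Set.Icc (t.orderEmbOfFin ht i) (s.orderEmbOfFin hs i)) (Set.Icc b a) := by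
  by_cases hia : s.orderEmbOfFin hs i ≤ a
  · exact Or.inl (Set.Icc_subset_Icc (hb _ (t.orderEmbOfFin_mem ht i)) hia)
  · have hai := lt_orderEmbOfFin_of_card_filter_le hs ht h (not_le.1 hia)
    exact Or.inr (Set.disjoint_left.2 fun x hx hx' ↦ (hai.trans_le hx.1).not_ge hx'.2)

end Finset

open Set

section Transversal

variable {ι α : Type*}

def IsTransversal (A : ι → Set α) (B : Set α) : Prop :=
  ∃ f : ι ↪ α, (∀ i, f i ∈ A i) ∧ range f = B

lemma IsTransversal.splice {A : ι → Set α} {X C D : Set α}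
    (hA : ∀ i, A i ⊆ X ∨ Disjoint (A i) X) (hC : IsTransversal A C) (hD : IsTransversal A D) :
    IsTransversal A (C ∩ X ∪ D \ X) := by
  classical
  obtain ⟨f, hfA, rfl⟩ := hC
  obtain ⟨g, hgA, rfl⟩ := hD
  have hside : ∀ i, ∀ x ∈ A i, x ∈ X ↔ A i ⊆ X := fun i x hx ↦
    (hA i).elim (fun h ↦ iff_of_true (h hx) h)
      fun h ↦ iff_of_false (h.notMem_of_mem_left hx) fun h' ↦ h.notMem_of_mem_left hx (h' hx)
  let h i := if A i ⊆ X then f i else g i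
  have hhA i : h i ∈ A i := by unfold h; split_ifs; exacts [hfA i, hgA i]
  have hinj : Function.Injective h := by
    intro i i' hii'
    have hside' := (hside i _ (hhA i)).symm.trans (hii' ▸ hside i' _ (hhA i'))
    unfold h at hii'
    by_cases hi : A i ⊆ X
    · rw [if_pos hi, if_pos (hside'.1 hi)] at hii'; exact f.injective hii'
    · rw [if_neg hi, if_neg (mt hside'.2 hi)] at hii'; exact g.injective hii'
  refine ⟨⟨h, hinj⟩, hhA, ?_⟩
  ext x
  constructor
  · rintro ⟨i, rfl⟩
    by_cases hi : A i ⊆ X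
    · exact Or.inl ⟨⟨i, (if_pos hi).symm⟩, by simpa [h, hi] using hi (hfA i)⟩
    · exact Or.inr ⟨⟨i, (if_neg hi).symm⟩, by simpa [h, hi] using mt (hside i _ (hgA i)).1 hi⟩
  · rintro (⟨⟨i, rfl⟩, hx⟩ | ⟨⟨i, rfl⟩, hx⟩)
    · exact ⟨i, if_pos ((hside i _ (hfA i)).1 hx)⟩
    · exact ⟨i, if_neg (mt (hside i _ (hgA i)).2 hx)⟩

variable [LinearOrder ι] [PartialOrder α] {lo hi : ι → α} {j : ι} {c : α}

lemma notMem_image_Iio_union_image_Ioi (hlo : StrictMono lo) (hhi : StrictMono hi)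
    (hc : c ∈ Icc (lo j) (hi j)) : c ∉ lo '' Iio j ∪ hi '' Ioi j := by
  rintro (⟨i, hi, rfl⟩ | ⟨i, hi, rfl⟩)
  · exact (hlo hi).not_ge hc.1
  · exact (hhi hi).not_ge hc.2

lemma isTransversal_Icc_insert (hlo : StrictMono lo) (hhi : StrictMono hi) (hle : lo ≤ hi)
    (hc : c ∈ Icc (lo j) (hi j)) :
    IsTransversal (fun i ↦ Icc (lo i) (hi i)) (insert c (lo '' Iio j ∪ hi '' Ioi j)) := by
  classical
  let f i := if i < j then lo i else if i = j then c else hi i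
  have hlo_c : ∀ i < j, lo i < c := fun i h ↦ (hlo h).trans_le hc.1
  have hc_hi : ∀ i, j < i → c < hi i := fun i h ↦ hc.2.trans_lt (hhi h)
  have hf : StrictMono f := by
    intro i i' hii'
    unfold f
    split_ifs <;> first
      | order
      | exact hlo hii'
      | exact hhi hii'
      | exact hlo_c _ ‹_›
      | exact hc_hi _ (by order)
      | exact (hlo_c _ ‹_›).trans (hc_hi _ (by order))
  refine ⟨⟨f, hf.injective⟩, fun i ↦ ?_, ?_⟩
  · simp only [Function.Embedding.coeFn_mk, f]
    split_ifs
    exacts [⟨le_rfl, hle i⟩, by subst_vars; exact hc, ⟨hle i, le_rfl⟩]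
  · ext x
    simp only [Function.Embedding.coeFn_mk, mem_range, mem_insert_iff, mem_union, mem_image,
      mem_Iio, mem_Ioi]
    constructor
    · rintro ⟨i, rfl⟩
      unfold f
      split_ifs with h₁ h₂
      exacts [Or.inr (Or.inl ⟨i, h₁, rfl⟩), Or.inl rfl, Or.inr (Or.inr ⟨i, by order, rfl⟩)]
    · rintro (rfl | ⟨i, hi, rfl⟩ | ⟨i, hi, rfl⟩)
      · exact ⟨j, by simp [f]⟩
      · exact ⟨i, if_pos hi⟩
      · exact ⟨i, by simp [f, hi.not_gt, hi.ne']⟩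

end Transversal

namespace Matroid

variable {α : Type*} {M : Matroid α} {X : Set α}

def IsDirectSumAlong (M : Matroid α) (X : Set α) : Prop :=
  ∀ B, M.IsBase B ↔
    ∃ B₁ B₂, (M.restrict X).IsBase B₁ ∧ (M.restrict (M.E \ X)).IsBase B₂ ∧ B = B₁ ∪ B₂

lemma IsDirectSumAlong.isBase_restrict_inter (hX : M.IsDirectSumAlong X) {B : Set α}
    (hB : M.IsBase B) : (M ↾ X).IsBase (B ∩ X) := by
  obtain ⟨B₁, B₂, hB₁, hB₂, rfl⟩ := (hX B).1 hB
  have h₁ : B₁ ⊆ X := hB₁.subset_ground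
  have h₂ : B₂ ⊆ M.E \ X := hB₂.subset_ground
  rwa [union_inter_distrib_right, inter_eq_self_of_subset_left h₁,
    (disjoint_sdiff_left.mono_left h₂).inter_eq, union_empty]

lemma IsDirectSumAlong.mem_iff_mem_of_isBase_insert (hX : M.IsDirectSumAlong X) {S : Set α}
    {e f : α} (he : e ∉ S) (hf : f ∉ S) (hBe : M.IsBase (insert e S))
    (hBf : M.IsBase (insert f S)) : e ∈ X ↔ f ∈ X := by
  suffices key : ∀ e f, e ∉ S → M.IsBase (insert e S) → M.IsBase (insert f S) →
      e ∈ X → f ∈ X from ⟨key e f he hBe hBf, key f e hf hBf hBe⟩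
  intro e f he hBe hBf heX
  by_contra hfX
  have hsub : insert f S ∩ X ⊆ insert e S ∩ X := by
    rw [insert_inter_of_notMem hfX]
    exact inter_subset_inter_left _ (subset_insert _ _)
  have heq := (hX.isBase_restrict_inter hBf).eq_of_subset_isBase
    (hX.isBase_restrict_inter hBe) hsub
  have : e ∈ insert f S ∩ X := heq ▸ ⟨mem_insert _ _, heX⟩
  rw [insert_inter_of_notMem hfX] at this
  exact he this.1

lemma isBase_restrict_iff_of_splice (hXE : X ⊆ M.E)
    (hsplice : ∀ C D, M.IsBase C → M.IsBase D → M.IsBase (C ∩ X ∪ D \ X)) {I : Set α} :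
    (M ↾ X).IsBase I ↔ ∃ C, M.IsBase C ∧ I = C ∩ X := by
  rw [isBase_restrict_iff hXE]
  constructor
  · intro hI
    obtain ⟨C, hC, hIC⟩ := hI.indep.exists_isBase_superset
    exact ⟨C, hC, hI.eq_of_subset_indep (hC.indep.subset inter_subset_left)
      (subset_inter hIC hI.subset) inter_subset_right⟩
  · rintro ⟨C, hC, rfl⟩
    refine (hC.indep.subset inter_subset_left).isBasis_of_maximal_subset inter_subset_right
      fun J hJ hCJ hJX ↦ ?_
    obtain ⟨D, hD, hJD⟩ := hJ.exists_isBase_superset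
    have hC_sub : C ⊆ D ∩ X ∪ C \ X := fun x hx ↦ by
      by_cases hxX : x ∈ X
      · exact Or.inl ⟨hJD (hCJ ⟨hx, hxX⟩), hxX⟩
      · exact Or.inr ⟨hx, hxX⟩
    have hC_eq := hC.eq_of_subset_isBase (hsplice D C hD hC) hC_sub
    exact fun x hx ↦ ⟨hC_eq ▸ Or.inl ⟨hJD hx, hJX hx⟩, hJX hx⟩

lemma isDirectSumAlong_of_splice (hXE : X ⊆ M.E)
    (hsplice : ∀ C D, M.IsBase C → M.IsBase D → M.IsBase (C ∩ X ∪ D \ X)) :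
    M.IsDirectSumAlong X := by
  have hsplice' : ∀ C D, M.IsBase C → M.IsBase D →
      M.IsBase (C ∩ (M.E \ X) ∪ D \ (M.E \ X)) := fun C D hC hD ↦ by
    convert hsplice D C hD hC using 1
    ext x
    have hCE : x ∈ C → x ∈ M.E := fun h ↦ hC.subset_ground h
    have hDE : x ∈ D → x ∈ M.E := fun h ↦ hD.subset_ground h
    simp only [mem_union, mem_inter_iff, mem_sdiff]
    tauto
  intro B
  simp only [isBase_restrict_iff_of_splice hXE hsplice,
    isBase_restrict_iff_of_splice sdiff_subset hsplice']
  constructor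
  · intro hB
    refine ⟨_, _, ⟨B, hB, rfl⟩, ⟨B, hB, rfl⟩, ?_⟩
    rw [← inter_union_distrib_left, union_sdiff_cancel hXE, inter_eq_left.2 hB.subset_ground]
  · rintro ⟨_, _, ⟨C, hC, rfl⟩, ⟨D, hD, rfl⟩, rfl⟩
    convert hsplice C D hC hD using 2
    rw [← inter_sdiff_assoc, inter_eq_left.2 hD.subset_ground]

section Transversal

variable {ι : Type*} {A : ι → Set α}

lemma isDirectSumAlong_of_isTransversal (hB : ∀ B, M.IsBase B ↔ IsTransversal A B)
    (hXE : X ⊆ M.E) (hA : ∀ i, A i ⊆ X ∨ Disjoint (A i) X) : M.IsDirectSumAlong X :=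
  isDirectSumAlong_of_splice hXE fun C D hC hD ↦ by
    rw [hB] at hC hD ⊢
    exact hC.splice hA hD

lemma IsDirectSumAlong.mem_iff_mem_of_mem_Icc [LinearOrder ι] [PartialOrder α] {lo hi : ι → α}
    (hX : M.IsDirectSumAlong X) (hB : ∀ B, M.IsBase B ↔ IsTransversal (fun i ↦ Icc (lo i) (hi i)) B)
    (hlo : StrictMono lo) (hhi : StrictMono hi) (hle : lo ≤ hi) {j : ι} {c c' : α}
    (hc : c ∈ Icc (lo j) (hi j)) (hc' : c' ∈ Icc (lo j) (hi j)) : c ∈ X ↔ c' ∈ X :=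
  hX.mem_iff_mem_of_isBase_insert
    (notMem_image_Iio_union_image_Ioi hlo hhi hc) (notMem_image_Iio_union_image_Ioi hlo hhi hc')
    ((hB _).2 (isTransversal_Icc_insert hlo hhi hle hc))
    ((hB _).2 (isTransversal_Icc_insert hlo hhi hle hc'))

end Transversal

end Matroid

lemma isBase_iff_isTransversal_Icc {M : Matroid ℕ} {r : ℕ} {lo hi : Fin r → ℕ} (hE : M.E.Finite)
    (h : ∀ B : Finset ℕ, M.IsBase ↑B ↔ IsTransLH r lo hi B) (B : Set ℕ) :
    M.IsBase B ↔ IsTransversal (fun i ↦ Icc (lo i) (hi i)) B := by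
  constructor
  · intro hB
    lift B to Finset ℕ using hE.subset hB.subset_ground
    obtain ⟨f, hf, rfl⟩ := (h B).1 hB
    exact ⟨f, hf, by simp⟩
  · rintro ⟨f, hf, rfl⟩
    have hrange : range f = ↑(Finset.univ.map f) := by simp
    rw [hrange, h]
    exact ⟨f, hf, rfl⟩

lemma mem_iff_mem_of_forall_mem_iff_mem_succ {X : Set ℕ} {a b : ℕ}
    (h : ∀ e, a ≤ e → e < b → (e ∈ X ↔ e + 1 ∈ X)) {x : ℕ} (hax : a ≤ x) (hxb : x ≤ b) :
    x ∈ X ↔ a ∈ X := by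
  induction x, hax using Nat.le_induction with
  | base => rfl
  | succ n han ih => rw [← h n han (by omega), ih (by omega)]

/-- **Connectedness of lattice path matroids.**  Let `M = M[P,Q]` be the lattice path
matroid with bounding paths `P` (lower) and `Q` (upper) from `(0,0)` to `(m,r)`
(encoded by North-step position sets in `[1, m+r]`, prefix counts of `P` at most
those of `Q`), whose bases are the `r`-element transversals of the associated
interval system.  Then `M` is connected (not a direct sum of two nonempty matroids)
if and only if `P` and `Q` intersect only at `(0,0)` and `(m,r)`, i.e. for every
`0 < p < m+r` the prefix North-count of `P` is strictly less than that of `Q`. -/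
theorem stmt7 (m r : ℕ) (P Q : Finset ℕ) (M : Matroid ℕ)
    (hPs : P ⊆ Finset.Icc 1 (m + r)) (hQs : Q ⊆ Finset.Icc 1 (m + r))
    (hP : P.card = r) (hQ : Q.card = r)
    (hPQ : ∀ p ≤ m + r, (P.filter (· ≤ p)).card ≤ (Q.filter (· ≤ p)).card)
    (hE : M.E = ↑(Finset.Icc 1 (m + r)))
    (hBase : ∀ B : Finset ℕ, M.IsBase ↑B ↔
      IsTransLH r (fun i => (Q.orderIsoOfFin hQ i : ℕ)) (fun i => (P.orderIsoOfFin hP i : ℕ)) B) :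
    ¬ IsDirectSumDecomposable M ↔
      ∀ p, 0 < p → p < m + r → (P.filter (· ≤ p)).card < (Q.filter (· ≤ p)).card := by
  simp only [Finset.coe_orderIsoOfFin_apply] at hBase
  have hB := isBase_iff_isTransversal_Icc (hE ▸ Finset.finite_toSet _) hBase
  have hEmem (x : ℕ) : x ∈ M.E ↔ 1 ≤ x ∧ x ≤ m + r := by rw [hE, Finset.coe_Icc]; rfl
  constructor
  · intro hconn p hp0 hpN
    by_contra! hle
    have hXE : Icc 1 p ⊆ M.E := fun x hx ↦ (hEmem x).2 ⟨hx.1, hx.2.trans hpN.le⟩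
    refine hconn ⟨Icc 1 p, hXE, ⟨1, le_rfl, hp0⟩,
      ⟨p + 1, (hEmem _).2 ⟨by omega, hpN⟩, fun h ↦ by have := h.2; omega⟩,
      Matroid.isDirectSumAlong_of_isTransversal hB hXE ?_⟩
    exact Finset.Icc_orderEmbOfFin_subset_or_disjoint hP hQ
      (fun x hx ↦ (Finset.mem_Icc.1 (hQs hx)).1) hle
  · rintro hstrict ⟨X, hXE, ⟨a, haX⟩, ⟨b, hbE, hbX⟩, hX⟩
    have hle := Finset.orderEmbOfFin_le_orderEmbOfFin hP hQ
      fun a ha ↦ hPQ a (Finset.mem_Icc.1 (hPs ha)).2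
    have hstep (e : ℕ) (he1 : 1 ≤ e) (heN : e < m + r) : e ∈ X ↔ e + 1 ∈ X := by
      obtain ⟨j, hje, hej⟩ := Finset.exists_orderEmbOfFin_le_lt hP hQ (hstrict e (by omega) heN)
      exact Matroid.IsDirectSumAlong.mem_iff_mem_of_mem_Icc hX hB (Q.orderEmbOfFin hQ).strictMono
        (P.orderEmbOfFin hP).strictMono hle ⟨hje, hej.le⟩ ⟨by omega, hej⟩
    obtain ⟨ha1, haN⟩ := (hEmem a).1 (hXE haX)
    obtain ⟨hb1, hbN⟩ := (hEmem b).1 hbE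
    exact hbX ((mem_iff_mem_of_forall_mem_iff_mem_succ hstep hb1 hbN).2
      ((mem_iff_mem_of_forall_mem_iff_mem_succ hstep ha1 haN).1 haX))
end

section
/- Let Q be a lattice path from (0,0) to (m,r) and let M[Q] be the generalized Catalan matroid with lower bounding path E^m N^r and upper bounding path Q. A subset C of [m+r] is a circuit of M[Q] if and only if, letting i be the largest element of C and P(C) the lattice path whose North steps occur exactly at the positions in C, the i-th step of P(C) is the unique North step of P(C) that lies above Q. -/
/-!
A set `X ⊆ [m + r]` is independent in `M[Q]` exactly when no North step of `P(X)` lies above `Q`.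
Necessity: the elements of `X` up to `x` are matched to distinct intervals starting at or before
`x`, and there are as many of those as North steps of `Q` up to `x`. Sufficiency: send `c ∈ X`
to the interval of index `max (rank of c in X) (c - m - 1)`.

For a circuit `C` with largest element `i`, deleting `i` lowers no step before `i`, so `i` is
the only step above `Q`. Conversely, if `i` is the only such step, deleting any element lowers
the step at `i` by one, to the height `P(C)` has just before `i`, which is at most that of `Q`.
-/

/-- `X` is a partial transversal of the interval system `(N_j = [lo j, hi j])_{j : Fin r}`:
there is an injective assignment of the elements of `X` to distinct indices `j` with
`lo j ≤ x ≤ hi j`. -/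
def IsPT (r : ℕ) (lo hi : Fin r → ℕ) (X : Finset ℕ) : Prop :=
  ∃ f : X → Fin r, Function.Injective f ∧ ∀ x : X, lo (f x) ≤ (x : ℕ) ∧ (x : ℕ) ≤ hi (f x)

open Finset

section LinearOrder

variable {α : Type*} [LinearOrder α]

theorem card_filter_lt_lt_of_mem {X : Finset α} {c d : α} (hc : c ∈ X) (hcd : c < d) :
    #(X.filter (· < c)) < #(X.filter (· < d)) :=
  card_lt_card <| (ssubset_iff_of_subset (monotone_filter_right X fun _ _ h => h.trans hcd)).2
    ⟨c, mem_filter.2 ⟨hc, hcd⟩, fun h => lt_irrefl c (mem_filter.1 h).2⟩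

theorem le_of_lt_card_filter_le {r : ℕ} {g : Fin r → α} (hg : Monotone g) {j : Fin r} {x : α}
    (hj : (j : ℕ) < #(univ.filter (g · ≤ x))) : g j ≤ x := by
  by_contra! hx
  have hsub : univ.filter (g · ≤ x) ⊆ Iio j := fun k hk =>
    mem_Iio.2 <| lt_of_not_ge fun hjk => (hg hjk).not_gt (hx.trans_le' (mem_filter.1 hk).2)
  exact (card_le_card hsub).not_gt (by rwa [Fin.card_Iio])

theorem card_filter_orderIsoOfFin_le {Q : Finset α} {r : ℕ} (hQ : #Q = r) (x : α) :
    #(univ.filter (fun j => (Q.orderIsoOfFin hQ j : α) ≤ x)) = #(Q.filter (· ≤ x)) := by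
  conv_rhs => rw [← map_orderEmbOfFin_univ Q hQ, filter_map, card_map]
  rfl

end LinearOrder

theorem IsPT.card_filter_le {r : ℕ} {lo hi : Fin r → ℕ} {X : Finset ℕ} (hX : IsPT r lo hi X)
    (x : ℕ) : #(X.filter (· ≤ x)) ≤ #(univ.filter (lo · ≤ x)) := by
  obtain ⟨f, hf, hbounds⟩ := hX
  calc #(X.filter (· ≤ x)) = #(X.attach.filter (fun c : X => (c : ℕ) ≤ x)) := by
        rw [filter_attach (· ≤ x), card_map, card_attach]
    _ ≤ #(univ.filter (lo · ≤ x)) :=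
        card_le_card_of_injOn f (fun c hc => by
          simp only [coe_filter, mem_attach, true_and, Set.mem_ofPred_eq, mem_univ] at hc ⊢
          exact (hbounds c).1.trans hc) hf.injOn

theorem card_le_card_filter_le_add {Q : Finset ℕ} {n : ℕ} (hQ : Q ⊆ Iic n) (c : ℕ) :
    #Q ≤ #(Q.filter (· ≤ c)) + (n - c) := by
  have hgt : Q.filter (fun q => ¬ q ≤ c) ⊆ Ioc c n := fun q hq => by
    obtain ⟨hqQ, hqc⟩ := mem_filter.1 hq
    exact mem_Ioc.2 ⟨not_le.1 hqc, mem_Iic.1 (hQ hqQ)⟩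
  rw [← card_filter_add_card_filter_not (· ≤ c)]
  simpa using card_le_card hgt

/-- The North step of `P(X)` at position `x` ends strictly above the path `Q`. -/
def StepAbove {α : Type*} [LinearOrder α] (Q X : Finset α) (x : α) : Prop :=
  #(Q.filter (· ≤ x)) < #(X.filter (· ≤ x))

def NoStepAbove {α : Type*} [LinearOrder α] (Q X : Finset α) : Prop :=
  ∀ x ∈ X, ¬ StepAbove Q X x

theorem isPT_iff_noStepAbove {m r : ℕ} {Q : Finset ℕ} (hQs : Q ⊆ Iic (m + r)) (hQ : #Q = r)
    {X : Finset ℕ} (hXs : X ⊆ Iic (m + r)) :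
    IsPT r (fun j => (Q.orderIsoOfFin hQ j : ℕ)) (fun j => m + (j : ℕ) + 1) X ↔
      NoStepAbove Q X := by
  refine ⟨fun hX x _ => not_lt.2 ?_, fun hX => ?_⟩
  · simpa only [card_filter_orderIsoOfFin_le] using hX.card_filter_le x
  -- The rank term makes the assignment injective, the other one respects the upper ends `m + j + 1`.
  let idx : X → ℕ := fun c => max #(X.filter (· < (c : ℕ))) (c - (m + 1))
  have hidx : ∀ c : X, idx c < #(Q.filter (· ≤ (c : ℕ))) := by
    intro c
    have hrank : #(X.filter (· < (c : ℕ))) < #(X.filter (· ≤ (c : ℕ))) := by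
      simpa only [Nat.lt_succ_iff] using card_filter_lt_lt_of_mem c.2 (Nat.lt_succ_self c)
    have hbelow := not_lt.1 (hX c c.2)
    have hQc := card_le_card_filter_le_add hQs c
    have hc := mem_Iic.1 (hXs c.2)
    simp only [idx]
    omega
  have hQr : ∀ c, #(Q.filter (· ≤ c)) ≤ r := fun c => hQ ▸ card_filter_le Q _
  let f : X → Fin r := fun c => ⟨idx c, (hidx c).trans_le (hQr c)⟩
  refine ⟨f, StrictMono.injective fun c d hcd => ?_, fun c => ⟨?_, ?_⟩⟩
  · have hcd : (c : ℕ) < d := hcd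
    have hrank := card_filter_lt_lt_of_mem c.2 hcd
    change idx c < idx d
    simp only [idx]
    omega
  · have hc := hidx c
    rw [← card_filter_orderIsoOfFin_le hQ] at hc
    exact le_of_lt_card_filter_le ((Subtype.mono_coe _).comp (Q.orderIsoOfFin hQ).monotone) hc
  · change (c : ℕ) ≤ m + idx c + 1
    simp only [idx]
    omega

section Circuit

variable {α : Type*} [LinearOrder α] {Q C : Finset α}

theorem card_filter_lt_le_of_not_stepAbove {i : α}
    (h : ∀ x ∈ C, x < i → ¬ StepAbove Q C x) :
    #(C.filter (· < i)) ≤ #(Q.filter (· < i)) := by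
  rcases (C.filter (· < i)).eq_empty_or_nonempty with hempty | hne
  · simp [hempty]
  -- Up to `i`, the path `P(C)` is highest right after its last North step `j` before `i`.
  set j := (C.filter (· < i)).max' hne
  obtain ⟨hjC, hji⟩ := mem_filter.1 (max'_mem _ hne)
  have hCj : C.filter (· < i) = C.filter (· ≤ j) := by
    ext x
    simp only [mem_filter, and_congr_right_iff]
    exact fun hx => ⟨fun hxi => le_max' _ x (mem_filter.2 ⟨hx, hxi⟩), fun hxj => hxj.trans_lt hji⟩
  calc #(C.filter (· < i)) = #(C.filter (· ≤ j)) := by rw [hCj]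
    _ ≤ #(Q.filter (· ≤ j)) := not_lt.1 (h j hjC hji)
    _ ≤ #(Q.filter (· < i)) := card_le_card (monotone_filter_right Q fun _ _ hx => hx.trans_lt hji)

theorem exists_unique_stepAbove_of_circuit (hC : ¬ NoStepAbove Q C)
    (herase : ∀ x ∈ C, NoStepAbove Q (C.erase x)) :
    ∃ i ∈ C, (∀ x ∈ C, x ≤ i) ∧ ∀ x ∈ C, (StepAbove Q C x ↔ x = i) := by
  obtain ⟨y, hyC, hy⟩ : ∃ y ∈ C, StepAbove Q C y := by
    simpa only [NoStepAbove, not_forall, not_not, exists_prop] using hC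
  have hne : C.Nonempty := ⟨y, hyC⟩
  set i := C.max' hne
  have hiC : i ∈ C := C.max'_mem hne
  have hmax : ∀ x ∈ C, x ≤ i := fun x hx => C.le_max' x hx
  have hbelow : ∀ x ∈ C, x ≠ i → ¬ StepAbove Q C x := by
    intro x hx hxi
    have hi : i ∉ C.filter (· ≤ x) := fun h =>
      hxi ((hmax x hx).antisymm (mem_filter.1 h).2)
    simpa only [StepAbove, filter_erase, erase_eq_of_notMem hi] using
      herase i hiC x (mem_erase.2 ⟨hxi, hx⟩)
  have hyi : y = i := by_contra fun h => hbelow y hyC h hy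
  exact ⟨i, hiC, hmax, fun x hx =>
    ⟨fun h => by_contra fun hxi => hbelow x hx hxi h, fun hxi => hxi ▸ hyi ▸ hy⟩⟩

theorem circuit_of_unique_stepAbove {i : α} (hiC : i ∈ C) (hmax : ∀ x ∈ C, x ≤ i)
    (hunique : ∀ x ∈ C, (StepAbove Q C x ↔ x = i)) :
    ¬ NoStepAbove Q C ∧ ∀ x ∈ C, NoStepAbove Q (C.erase x) := by
  refine ⟨fun h => h i hiC ((hunique i hiC).2 rfl), fun x hx y hy hyabove => ?_⟩
  have hyC := mem_of_mem_erase hy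
  by_cases hyi : y = i
  · subst hyi
    have hCy : C.filter (· < y) = C.erase y := by
      ext z
      simp only [mem_filter, mem_erase]
      exact ⟨fun h => ⟨h.2.ne, h.1⟩, fun h => ⟨h.2, (hmax z h.2).lt_of_ne h.1⟩⟩
    have hlt := card_filter_lt_le_of_not_stepAbove fun z hz (hzy : z < y) =>
      (hunique z hz).not.2 hzy.ne
    have hQ : #(Q.filter (· < y)) ≤ #(Q.filter (· ≤ y)) :=
      card_le_card (monotone_filter_right Q fun _ _ h => h.le)
    rw [StepAbove, filter_true_of_mem fun z hz => hmax z (mem_of_mem_erase hz),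
      card_erase_of_mem hx, ← card_erase_of_mem hiC, ← hCy] at hyabove
    omega
  · refine hyi ((hunique y hyC).1 (hyabove.trans_le ?_))
    exact card_le_card (filter_subset_filter _ (erase_subset x C))

end Circuit

/-- `Q` lists the positions of the North steps of the upper path. With `j` counted from `0`,
`M[Q]` is the transversal matroid of the intervals `[l_j, m + j + 1]`, where `l_j` is the
`j`-th element of `Q`, and a circuit is a minimal set that is not a partial transversal. -/
theorem stmt8 (m r : ℕ) (Q : Finset ℕ)
    (hQs : Q ⊆ Finset.Icc 1 (m + r)) (hQ : Q.card = r)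
    (C : Finset ℕ) (hCs : C ⊆ Finset.Icc 1 (m + r)) :
    (¬ IsPT r (fun j => (Q.orderIsoOfFin hQ j : ℕ)) (fun j => m + (j : ℕ) + 1) C ∧
      ∀ x ∈ C, IsPT r (fun j => (Q.orderIsoOfFin hQ j : ℕ)) (fun j => m + (j : ℕ) + 1)
        (C.erase x))
    ↔ ∃ i ∈ C, (∀ x ∈ C, x ≤ i) ∧
        ∀ x ∈ C, ((Q.filter (· ≤ x)).card < (C.filter (· ≤ x)).card ↔ x = i) := by
  have hQs' := hQs.trans Icc_subset_Iic_self
  have hCs' := hCs.trans Icc_subset_Iic_self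
  rw [isPT_iff_noStepAbove hQs' hQ hCs', forall₂_congr fun x _ =>
    isPT_iff_noStepAbove hQs' hQ ((erase_subset x C).trans hCs')]
  exact ⟨fun h => exists_unique_stepAbove_of_circuit h.1 h.2,
    fun ⟨_, hiC, hmax, hunique⟩ => circuit_of_unique_stepAbove hiC hmax hunique⟩
end

section
/- The number of i-element circuits of the Catalan matroid M_n (the generalized Catalan matroid with upper path (EN)^n and lower path E^n N^n) equals the Catalan number C_{i-1} = (1/i) * binomial(2(i-1), i-1). -/
open Finset DyckStep

section Rank

variable {α : Type*} [LinearOrder α] (S : Finset α)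

lemma strictMonoOn_card_filter_le : StrictMonoOn (fun x => #{y ∈ S | y ≤ x}) S := by
  intro x _ y hy hxy
  refine card_lt_card ((ssubset_iff_of_subset ?_).2 ⟨y, ?_, ?_⟩)
  · exact monotone_filter_right S fun z _ hz => hz.trans hxy.le
  · simpa using hy
  · simp [hxy]

lemma strictMonoOn_card_filter_lt : StrictMonoOn (fun x => #{y ∈ S | y < x}) S := by
  intro x hx y _ hxy
  refine card_lt_card ((ssubset_iff_of_subset ?_).2 ⟨x, ?_, ?_⟩)
  · exact monotone_filter_right S fun z _ hz => hz.trans hxy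
  · simpa [hxy] using hx
  · simp

end Rank

lemma IsPT.card_le {r : ℕ} {lo hi : Fin r → ℕ} {X T : Finset ℕ} (hX : IsPT r lo hi X)
    (hT : T ⊆ X) {b : ℕ} (hb : ∀ x ∈ T, ∀ j, lo j ≤ x → (j : ℕ) < b) : #T ≤ b := by
  classical
  obtain ⟨f, hf, hlo⟩ := hX
  let g : ℕ → ℕ := fun x => if h : x ∈ X then f ⟨x, h⟩ else 0
  have hg : ∀ x (hx : x ∈ T), g x = f ⟨x, hT hx⟩ := fun x hx => dif_pos (hT hx)
  calc #T ≤ #(range b) := by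
        refine card_le_card_of_injOn g (fun x hx => ?_) fun x hx y hy hxy => ?_
        · simpa [hg x hx] using hb x hx _ (hlo ⟨x, hT hx⟩).1
        · simpa using hf (Fin.ext ((hg x hx).symm.trans (hxy.trans (hg y hy))))
    _ = b := card_range b

/-- Independence in the Catalan matroid `M_n`, presented by the intervals `N_j = [2j, n + j]`
(`j ∈ [n]`, indexed here from `0`). -/
abbrev CatalanIndep (n : ℕ) (X : Finset ℕ) : Prop :=
  IsPT n (fun j => 2 * ((j : ℕ) + 1)) (fun j => n + (j : ℕ) + 1) X

section CatalanIndep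

variable {n : ℕ} {X : Finset ℕ}

lemma CatalanIndep.two_mul_card_le (hX : CatalanIndep n X) {T : Finset ℕ} (hT : T ⊆ X) {p : ℕ}
    (hp : ∀ x ∈ T, x ≤ p) : 2 * #T ≤ p := by
  have := IsPT.card_le hX hT (b := p / 2) fun x hx j hj => by have := hp x hx; omega
  omega

lemma catalanIndep_of_injOn (g : ℕ → ℕ) (hg : Set.InjOn g X) (hlt : ∀ x ∈ X, g x < n)
    (hmem : ∀ x ∈ X, 2 * (g x + 1) ≤ x ∧ x ≤ n + g x + 1) : CatalanIndep n X :=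
  ⟨fun x => ⟨g x, hlt x x.2⟩, fun x y hxy => Subtype.ext (hg x.2 y.2 (congrArg Fin.val hxy)),
    fun x => hmem x x.2⟩

/-- Match `x` to the interval `max (rank x, x - n)`, counting intervals from `1`. -/
lemma catalanIndep_of_two_mul_card_filter_le (hX : ∀ x ∈ X, x ≤ 2 * n)
    (hrank : ∀ x ∈ X, 2 * #{y ∈ X | y ≤ x} ≤ x) : CatalanIndep n X := by
  have hpos : ∀ x ∈ X, 1 ≤ #{y ∈ X | y ≤ x} := fun x hx => card_pos.2 ⟨x, by simp [hx]⟩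
  refine catalanIndep_of_injOn (fun x => max #{y ∈ X | y ≤ x} (x - n) - 1) ?_ ?_ ?_
  · refine StrictMonoOn.injOn fun x hx y hy hxy => ?_
    have hrank_lt : #{z ∈ X | z ≤ x} < #{z ∈ X | z ≤ y} :=
      strictMonoOn_card_filter_le X hx hy hxy
    have := hpos x hx
    omega
  · intro x hx
    have := hrank x hx; have := hX x hx; have := hpos x hx
    omega
  · intro x hx
    have := hrank x hx; have := hX x hx; have := hpos x hx
    omega

end CatalanIndep

/-- Read `C` as the set of positions, counted from `1`, of the down-steps of a lattice path:
then `C` is a Dyck path of semilength `m` followed by one more down-step at `2m + 1`. -/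
structure IsDyckSet (m : ℕ) (C : Finset ℕ) : Prop where
  subset_Icc : C ⊆ Icc 1 (2 * m + 1)
  top_mem : 2 * m + 1 ∈ C
  card_eq : #C = m + 1
  two_mul_card_filter_le : ∀ p ≤ 2 * m, 2 * #{x ∈ C | x ≤ p} ≤ p

namespace IsDyckSet

variable {m : ℕ} {C : Finset ℕ}

lemma le_of_mem (hC : IsDyckSet m C) {x : ℕ} (hx : x ∈ C) : 1 ≤ x ∧ x ≤ 2 * m + 1 :=
  mem_Icc.1 (hC.subset_Icc hx)

lemma filter_le_eq_erase (hC : IsDyckSet m C) : {x ∈ C | x ≤ 2 * m} = C.erase (2 * m + 1) := by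
  ext x
  by_cases hx : x ∈ C
  · have := (hC.le_of_mem hx).2
    simp only [mem_filter, mem_erase, hx, and_true, true_and]
    omega
  · simp [hx]

lemma card_filter_le (hC : IsDyckSet m C) : #{x ∈ C | x ≤ 2 * m} = m := by
  rw [hC.filter_le_eq_erase, card_erase_of_mem hC.top_mem, hC.card_eq, Nat.add_sub_cancel]

lemma not_catalanIndep (hC : IsDyckSet m C) (n : ℕ) : ¬ CatalanIndep n C := fun hind => by
  have := hind.two_mul_card_le subset_rfl fun x hx => (hC.le_of_mem hx).2
  rw [hC.card_eq] at this
  omega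

/-- Match `y` to the interval indexed by its rank `#{z ∈ E | z < y}` in `E = C.erase x₀`. -/
lemma catalanIndep_erase (hC : IsDyckSet m C) {n : ℕ} (hmn : m + 1 ≤ n) {x₀ : ℕ} (hx₀ : x₀ ∈ C) :
    CatalanIndep n (C.erase x₀) := by
  set E := C.erase x₀
  have hE : #E = m := by rw [card_erase_of_mem hx₀, hC.card_eq, Nat.add_sub_cancel]
  have hrank_lt : ∀ y ∈ E, #{z ∈ E | z < y} < #E := fun y hy =>
    card_lt_card (filter_ssubset.2 ⟨y, hy, lt_irrefl y⟩)
  refine catalanIndep_of_injOn (fun y => #{z ∈ E | z < y}) (strictMonoOn_card_filter_lt E).injOn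
    (fun y hy => by have := hrank_lt y hy; omega) fun y hy => ?_
  have hyC : y ∈ C := mem_of_mem_erase hy
  have hrank_succ : #{z ∈ E | z < y} + 1 ≤ #{z ∈ C | z ≤ y} := by
    rw [← card_insert_of_notMem (s := {z ∈ E | z < y}) (a := y) (by simp)]
    refine card_le_card fun z hz => ?_
    simp only [mem_insert, mem_filter, E, mem_erase] at hz ⊢
    rcases hz with rfl | ⟨⟨_, hzC⟩, hzy⟩
    · exact ⟨hyC, le_rfl⟩
    · exact ⟨hzC, hzy.le⟩
  have hrank_add_two : #{z ∈ C | z ≤ y} ≤ #{z ∈ E | z < y} + 2 := by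
    calc #{z ∈ C | z ≤ y} ≤ #(insert y (insert x₀ {z ∈ E | z < y})) := by
          refine card_le_card fun z hz => ?_
          simp only [mem_filter, mem_insert, E, mem_erase] at hz ⊢
          grind
      _ ≤ #{z ∈ E | z < y} + 2 :=
          (card_insert_le _ _).trans (Nat.add_le_add_right (card_insert_le _ _) 1)
  have habove : #{z ∈ C | ¬ z ≤ y} ≤ 2 * m + 1 - y := by
    calc #{z ∈ C | ¬ z ≤ y} ≤ #(Ioc y (2 * m + 1)) := by
          refine card_le_card fun z hz => ?_
          simp only [mem_filter, mem_Ioc] at hz ⊢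
          exact ⟨by omega, (hC.le_of_mem hz.1).2⟩
      _ = 2 * m + 1 - y := Nat.card_Ioc _ _
  have hsplit := card_filter_add_card_filter_not (s := C) (p := (· ≤ y))
  have hcard := hC.card_eq
  have hy_le := (hC.le_of_mem hyC).2
  refine ⟨?_, by omega⟩
  rcases eq_or_ne y (2 * m + 1) with rfl | hy_ne
  · have := hrank_lt _ hy
    omega
  · have := hC.two_mul_card_filter_le y (by omega)
    omega

end IsDyckSet

lemma isDyckSet_of_catalanCircuit {n m : ℕ} {C : Finset ℕ} (hsub : C ⊆ Icc 1 (2 * n))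
    (hcard : #C = m + 1) (hdep : ¬ CatalanIndep n C) (hmin : ∀ x ∈ C, CatalanIndep n (C.erase x)) :
    IsDyckSet m C := by
  have hne : C.Nonempty := card_pos.1 (by omega)
  set M := C.max' hne
  have hM : M ∈ C := C.max'_mem hne
  have hle_M : ∀ x ∈ C, x ≤ M := fun x hx => C.le_max' x hx
  have hbelow : ∀ p < M, 2 * #{x ∈ C | x ≤ p} ≤ p := fun p hp =>
    (hmin M hM).two_mul_card_le
      (fun x hx => mem_erase.2 ⟨by have := (mem_filter.1 hx).2; omega, (mem_filter.1 hx).1⟩)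
      fun x hx => (mem_filter.1 hx).2
  have hM_pos : 1 ≤ M := (mem_Icc.1 (hsub hM)).1
  have hM_ge : 2 * m + 1 ≤ M := by
    have hfilter : {x ∈ C | x ≤ M - 1} = C.erase M := by
      ext x
      by_cases hx : x ∈ C
      · have := hle_M x hx
        simp only [mem_filter, mem_erase, hx, and_true, true_and]
        omega
      · simp [hx]
    have := hbelow (M - 1) (by omega)
    rw [hfilter, card_erase_of_mem hM, hcard] at this
    omega
  have hM_le : M ≤ 2 * m + 1 := by
    by_contra! hM_gt
    refine hdep (catalanIndep_of_two_mul_card_filter_le (fun x hx => (mem_Icc.1 (hsub hx)).2)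
      fun x hx => ?_)
    rcases (hle_M x hx).lt_or_eq with hxM | rfl
    · exact hbelow x hxM
    · rw [filter_true_of_mem hle_M, hcard]
      omega
  have hM_eq : M = 2 * m + 1 := le_antisymm hM_le hM_ge
  rw [hM_eq] at hM hle_M hbelow
  refine ⟨fun x hx => ?_, hM, hcard, fun p hp => hbelow p (by omega)⟩
  exact mem_Icc.2 ⟨(mem_Icc.1 (hsub hx)).1, hle_M x hx⟩

theorem catalanCircuit_iff_isDyckSet {n m : ℕ} (hmn : m + 1 ≤ n) {C : Finset ℕ} :
    (C ⊆ Icc 1 (2 * n) ∧ #C = m + 1 ∧ ¬ CatalanIndep n C ∧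
      ∀ x ∈ C, CatalanIndep n (C.erase x)) ↔ IsDyckSet m C := by
  refine ⟨fun ⟨hsub, hcard, hdep, hmin⟩ => isDyckSet_of_catalanCircuit hsub hcard hdep hmin, fun hC =>
    ⟨fun x hx => ?_, hC.card_eq, hC.not_catalanIndep n, fun x => hC.catalanIndep_erase hmn⟩⟩
  have := hC.le_of_mem hx
  exact mem_Icc.2 ⟨this.1, by omega⟩

lemma count_U_add_count_D (l : List DyckStep) : l.count U + l.count D = l.length := by
  induction l with
  | nil => rfl
  | cons s l ih => cases s <;> simp <;> omega

def wordOf (C : Finset ℕ) (k : ℕ) : List DyckStep :=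
  (List.range k).map fun q => if q + 1 ∈ C then D else U

def downSet (w : List DyckStep) : Finset ℕ :=
  {x ∈ Icc 1 w.length | w[x - 1]? = some D}

section wordOf

variable {C : Finset ℕ} {k : ℕ}

@[simp]
lemma length_wordOf : (wordOf C k).length = k := by
  simp [wordOf]

lemma take_wordOf (p : ℕ) : (wordOf C k).take p = wordOf C (min p k) := by
  rw [wordOf, ← List.map_take, List.take_range, wordOf]

lemma wordOf_insert_of_lt {a : ℕ} (ha : k < a) : wordOf (insert a C) k = wordOf C k := by
  refine List.map_congr_left fun q hq => ?_
  have : q + 1 ≠ a := by have := List.mem_range.1 hq; omega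
  simp [this]

lemma count_D_wordOf (hC : 0 ∉ C) : (wordOf C k).count D = #{x ∈ C | x ≤ k} := by
  induction k with
  | zero =>
    rw [filter_false_of_mem fun x hx hx0 => hC (Nat.le_zero.1 hx0 ▸ hx)]
    rfl
  | succ k ih =>
    have hfilter : {x ∈ C | x ≤ k + 1} = {x ∈ C | x ≤ k} ∪ {x ∈ C | x = k + 1} := by
      rw [← filter_or]
      exact filter_congr fun x _ => by omega
    rw [wordOf, List.range_succ, List.map_append, List.count_append, ← wordOf, ih, hfilter,
      card_union_of_disjoint (disjoint_filter.2 fun x _ hx => by omega), filter_eq']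
    split_ifs with h <;> simp [h]

lemma count_U_wordOf (hC : 0 ∉ C) : (wordOf C k).count U = k - #{x ∈ C | x ≤ k} := by
  have := count_U_add_count_D (wordOf C k)
  rw [count_D_wordOf hC, length_wordOf] at this
  omega

lemma downSet_wordOf : downSet (wordOf C k) = C ∩ Icc 1 k := by
  ext x
  simp only [downSet, wordOf, mem_filter, mem_inter, mem_Icc, List.length_map, List.length_range,
    List.getElem?_map]
  constructor
  · rintro ⟨hx, h⟩
    rw [List.getElem?_range (by omega)] at h
    simp only [Nat.sub_add_cancel hx.1, Option.map_some, Option.some.injEq] at h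
    split_ifs at h with hxC
    exact ⟨hxC, hx⟩
  · rintro ⟨hxC, hx⟩
    rw [List.getElem?_range (by omega)]
    simp [Nat.sub_add_cancel hx.1, hxC, hx]

lemma wordOf_downSet (w : List DyckStep) : wordOf (downSet w) w.length = w := by
  refine List.ext_getElem (by simp) fun q hq hqw => ?_
  simp only [wordOf, List.getElem_map, List.getElem_range, downSet, mem_filter, mem_Icc,
    Nat.add_sub_cancel, List.getElem?_eq_getElem hqw, Option.some.injEq]
  rcases w[q].dichotomy with h | h <;> simp [h, hqw]

end wordOf

namespace IsDyckSet

variable {m : ℕ} {C : Finset ℕ}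

lemma zero_notMem (hC : IsDyckSet m C) : 0 ∉ C := fun h => by
  have := (hC.le_of_mem h).1
  omega

def toDyckWord (hC : IsDyckSet m C) : DyckWord where
  toList := wordOf C (2 * m)
  count_U_eq_count_D := by
    rw [count_U_wordOf hC.zero_notMem, count_D_wordOf hC.zero_notMem, hC.card_filter_le]
    omega
  count_D_le_count_U p := by
    rw [take_wordOf, count_U_wordOf hC.zero_notMem, count_D_wordOf hC.zero_notMem]
    have := hC.two_mul_card_filter_le (min p (2 * m)) (min_le_right _ _)
    omega

lemma semilength_toDyckWord (hC : IsDyckSet m C) : hC.toDyckWord.semilength = m := by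
  rw [DyckWord.semilength, toDyckWord, count_U_wordOf hC.zero_notMem, hC.card_filter_le]
  omega

lemma insert_downSet_toDyckWord (hC : IsDyckSet m C) :
    insert (2 * m + 1) (downSet hC.toDyckWord.toList) = C := by
  rw [toDyckWord, downSet_wordOf]
  ext x
  have := fun hx => hC.le_of_mem (x := x) hx
  have := hC.top_mem
  simp only [mem_insert, mem_inter, mem_Icc]
  grind

end IsDyckSet

lemma isDyckSet_insert_downSet {m : ℕ} (w : DyckWord) (hw : w.semilength = m) :
    IsDyckSet m (insert (2 * m + 1) (downSet w.toList)) := by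
  set S := downSet w.toList
  have hlen : w.toList.length = 2 * m := by rw [← w.two_mul_semilength_eq_length, hw]
  have hS : S ⊆ Icc 1 (2 * m) := hlen ▸ filter_subset _ _
  have hS0 : 0 ∉ S := fun h => by simpa using hS h
  have hword : wordOf S (2 * m) = w.toList := hlen ▸ wordOf_downSet w.toList
  have htop : 2 * m + 1 ∉ S := fun h => by simpa using hS h
  have hcount (p : ℕ) (hp : p ≤ 2 * m) : (w.toList.take p).count D = #{x ∈ S | x ≤ p} := by
    rw [← hword, take_wordOf, min_eq_left hp, count_D_wordOf hS0]
  refine ⟨insert_subset (by simp) (hS.trans (Icc_subset_Icc_right (by omega))),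
    mem_insert_self _ _, ?_, fun p hp => ?_⟩
  · rw [card_insert_of_notMem htop, ← filter_true_of_mem fun x hx => (mem_Icc.1 (hS hx)).2,
      ← hcount _ le_rfl, List.take_of_length_le hlen.le, ← DyckWord.semilength_eq_count_D, hw]
  · have hD := w.count_D_le_count_U p
    have hUD := count_U_add_count_D (w.toList.take p)
    rw [List.length_take, hlen, min_eq_left hp, hcount p hp] at hUD
    rw [hcount p hp] at hD
    rw [filter_insert, if_neg (by omega)]
    omega

def isDyckSetEquiv (m : ℕ) : {C // IsDyckSet m C} ≃ {w : DyckWord // w.semilength = m} where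
  toFun C := ⟨C.2.toDyckWord, C.2.semilength_toDyckWord⟩
  invFun w := ⟨_, isDyckSet_insert_downSet w.1 w.2⟩
  left_inv C := Subtype.ext C.2.insert_downSet_toDyckWord
  right_inv w := by
    have hlen : w.1.toList.length = 2 * m := by rw [← w.1.two_mul_semilength_eq_length, w.2]
    refine Subtype.ext (DyckWord.ext ?_)
    change wordOf _ (2 * m) = _
    rw [wordOf_insert_of_lt (by omega), ← hlen, wordOf_downSet]

lemma card_isDyckSet (m : ℕ) : Nat.card {C // IsDyckSet m C} = catalan m := by
  rw [Nat.card_congr (isDyckSetEquiv m), Nat.card_eq_fintype_card,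
    DyckWord.card_dyckWord_semilength_eq_catalan]

/-- **Circuits of the Catalan matroid.**  The Catalan matroid `M_n` is the lattice
path matroid on `[1, 2n]` with upper path `(EN)^n` and lower path `E^n N^n`; its
presentation is the interval system `N_j = [2j, n + j]` for `j ∈ [n]`, its
independent sets are the partial transversals and its circuits the minimal
non-independent sets.  For `1 ≤ i ≤ n`, the number of `i`-element circuits of `M_n`,
multiplied by `i`, equals `(2(i-1)) choose (i-1)`; i.e. it is the Catalan number
`C_{i-1}`. -/
theorem stmt9 (n i : ℕ) (h1 : 1 ≤ i) (h2 : i ≤ n) :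
    Nat.card {C : Finset ℕ // C ⊆ Finset.Icc 1 (2 * n) ∧ C.card = i ∧
        ¬ IsPT n (fun j => 2 * ((j : ℕ) + 1)) (fun j => n + (j : ℕ) + 1) C ∧
        ∀ x ∈ C, IsPT n (fun j => 2 * ((j : ℕ) + 1)) (fun j => n + (j : ℕ) + 1) (C.erase x)}
      * i = Nat.choose (2 * (i - 1)) (i - 1) := by
  obtain ⟨m, rfl⟩ : ∃ m, i = m + 1 := ⟨i - 1, by omega⟩
  rw [Nat.card_congr (Equiv.subtypeEquivRight fun C => catalanCircuit_iff_isDyckSet h2),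
    card_isDyckSet, Nat.add_sub_cancel, mul_comm, succ_mul_catalan_eq_centralBinom,
    Nat.centralBinom_eq_two_mul_choose]
end

section
/- The number of independent sets of size i in the k-Catalan matroid M^k_n equals ((k+1)(n−i)+1)/((k+1)n+1) * binomial((k+1)n+1, i). -/
/-!
An independent set of `M^k_n` is a partial transversal of the intervals
`N_j = [(k+1)j, kn + j]`. A set `X ⊆ [(k+1)n]` with `|X| ≤ n` is one iff it is a ballot set,
i.e. every `x ∈ X` has at most `x / (k+1)` elements of `X` weakly below it: the `j`-th such
element needs its own interval of index at most `x / (k+1)`, and conversely `x` can be matched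
to the interval of index `max (rank x) (x - kn)`, which is strictly increasing in `x`.
Splitting on whether `m ∈ X`, ballot sets of size `i` in `[m]` obey Pascal's recurrence,
solved by the generalized ballot numbers `(m + 1 - (k+1)i) / (m + 1) * (m + 1 choose i)`.
-/

open Finset

/-- The lattice path of `X` has `#{y ∈ X | y ≤ x}` North steps among its first `x` steps, so it
stays weakly below `y = x / k` iff `(k + 1) * #{y ∈ X | y ≤ x} ≤ x` for every `x`; it suffices
to check this at the North steps `x ∈ X`. -/
def IsBallot (k : ℕ) (X : Finset ℕ) : Prop :=
  ∀ x ∈ X, (k + 1) * #{y ∈ X | y ≤ x} ≤ x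

instance (k : ℕ) : DecidablePred (IsBallot k) :=
  fun X => inferInstanceAs (Decidable (∀ x ∈ X, _))

def ballotSets (k m i : ℕ) : Finset (Finset ℕ) :=
  {X ∈ (Icc 1 m).powersetCard i | IsBallot k X}

lemma mem_ballotSets {k m i : ℕ} {X : Finset ℕ} :
    X ∈ ballotSets k m i ↔ (X ⊆ Icc 1 m ∧ #X = i) ∧ IsBallot k X := by
  rw [ballotSets, mem_filter, mem_powersetCard]

lemma ballotSets_zero (k m : ℕ) : ballotSets k m 0 = {∅} := by
  simp [ballotSets, IsBallot]

lemma isBallot_insert_iff {k a : ℕ} {X : Finset ℕ} (ha : ∀ x ∈ X, x < a) :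
    IsBallot k (insert a X) ↔ IsBallot k X ∧ (k + 1) * (#X + 1) ≤ a := by
  have haX : a ∉ X := fun h => (ha a h).false
  have below (x : ℕ) (hx : x ∈ X) : {y ∈ insert a X | y ≤ x} = {y ∈ X | y ≤ x} := by
    rw [filter_insert, if_neg (ha x hx).not_ge]
  have top : {y ∈ insert a X | y ≤ a} = insert a X :=
    filter_true_of_mem fun y hy => (mem_insert.1 hy).elim le_of_eq fun h => (ha y h).le
  simp only [IsBallot, forall_mem_insert, top, card_insert_of_notMem haX]
  constructor
  · rintro ⟨htop, hX⟩
    exact ⟨fun x hx => below x hx ▸ hX x hx, htop⟩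
  · rintro ⟨hX, htop⟩
    exact ⟨htop, fun x hx => (below x hx).symm ▸ hX x hx⟩

lemma ballotSets_eq_empty {k m i : ℕ} (h : m < (k + 1) * i) : ballotSets k m i = ∅ := by
  refine eq_empty_of_forall_notMem fun X hX => ?_
  obtain ⟨⟨hsub, hcard⟩, hX⟩ := mem_ballotSets.1 hX
  have hi : 0 < i := Nat.pos_of_ne_zero (by rintro rfl; simp at h)
  have hne : X.Nonempty := card_pos.1 (hcard ▸ hi)
  have hall : {y ∈ X | y ≤ X.max' hne} = X := filter_true_of_mem fun y hy => X.le_max' y hy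
  have := hX _ (X.max'_mem hne)
  rw [hall, hcard] at this
  have := (mem_Icc.1 (hsub (X.max'_mem hne))).2
  omega

lemma card_ballotSets_succ_succ {k m i : ℕ} (h : (k + 1) * (i + 1) ≤ m + 1) :
    #(ballotSets k (m + 1) (i + 1)) = #(ballotSets k m (i + 1)) + #(ballotSets k m i) := by
  have hm : m + 1 ∉ Icc 1 m := by simp
  have hIcc : Icc 1 (m + 1) = insert (m + 1) (Icc 1 m) := by ext; simp; omega
  have hlt {Y : Finset ℕ} (hY : Y ⊆ Icc 1 m) : ∀ y ∈ Y, y < m + 1 :=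
    fun y hy => Nat.lt_succ_of_le (mem_Icc.1 (hY hy)).2
  have hnotMem {Y : Finset ℕ} (hY : Y ∈ (Icc 1 m).powersetCard i) : m + 1 ∉ Y :=
    fun h => hm (mem_powersetCard.1 hY |>.1 h)
  have hinsert : {Y ∈ (Icc 1 m).powersetCard i | IsBallot k (insert (m + 1) Y)} =
      ballotSets k m i := by
    refine filter_congr fun Y hY => ?_
    obtain ⟨hsub, hcard⟩ := mem_powersetCard.1 hY
    rw [isBallot_insert_iff (hlt hsub), hcard, and_iff_left h]
  rw [ballotSets, hIcc, powersetCard_succ_insert hm, filter_union, filter_image, hinsert,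
    card_union_of_disjoint, card_image_of_injOn]
  · rfl
  · intro Y hY Z hZ hYZ
    have hY' := hnotMem (mem_filter.1 (mem_coe.1 hY)).1
    have hZ' := hnotMem (mem_filter.1 (mem_coe.1 hZ)).1
    rw [← erase_insert hY', ← erase_insert hZ', hYZ]
  · refine disjoint_left.2 fun X hX hX' => ?_
    obtain ⟨Y, -, rfl⟩ := mem_image.1 hX'
    exact hm ((mem_powersetCard.1 (mem_filter.1 hX).1).1 (mem_insert_self _ _))

-- Truncated subtraction is harmless: both sides vanish as soon as `m < (k + 1) * i`.
theorem card_ballotSets_mul (k m i : ℕ) :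
    #(ballotSets k m i) * (m + 1) = (m + 1 - (k + 1) * i) * (m + 1).choose i := by
  induction m generalizing i with
  | zero =>
    rcases i with _ | i
    · simp [ballotSets_zero]
    · rw [ballotSets_eq_empty (by positivity),
        Nat.sub_eq_zero_of_le (Nat.succ_le_of_lt (by positivity))]
      simp
  | succ m ih =>
    rcases i with _ | i
    · simp [ballotSets_zero]
    rcases lt_or_ge (m + 1) ((k + 1) * (i + 1)) with h | h
    · rw [ballotSets_eq_empty h, Nat.sub_eq_zero_of_le (by omega)]; simp
    have ih₁ := ih (i + 1)
    have ih₀ := ih i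
    have hpascal := Nat.choose_succ_succ (m + 1) i
    have habsorb := Nat.choose_succ_right_eq (m + 1) i
    rw [card_ballotSets_succ_succ h]
    apply Nat.eq_of_mul_eq_mul_right (Nat.succ_pos m)
    have hi : i ≤ m + 1 := by nlinarith
    zify [h, hi, (by nlinarith : (k + 1) * i ≤ m + 1), (by omega : (k + 1) * (i + 1) ≤ m + 1 + 1)]
      at ih₁ ih₀ hpascal habsorb ⊢
    linear_combination ((m : ℤ) + 2) * (ih₁ + ih₀) - ((k : ℤ) + 1) * habsorb
      - (((m : ℤ) + 2 - ((k : ℤ) + 1) * (i + 1)) * ((m : ℤ) + 1)) * hpascal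

theorem IsPT.isBallot {k r : ℕ} {hi : Fin r → ℕ} {X : Finset ℕ}
    (h : IsPT r (fun j => (k + 1) * ((j : ℕ) + 1)) hi X) : IsBallot k X := by
  obtain ⟨f, hf, hlo⟩ := h
  intro x _
  let g (y : {y ∈ X | y ≤ x}) : X := ⟨y, (mem_filter.1 y.2).1⟩
  have hg (y : {y ∈ X | y ≤ x}) : (f (g y) : ℕ) < x / (k + 1) := by
    have h₁ := (hlo (g y)).1
    have h₂ := (mem_filter.1 y.2).2
    rw [Nat.lt_iff_add_one_le, Nat.le_div_iff_mul_le (Nat.succ_pos k)]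
    simp only at h₁
    linarith
  have := Fintype.card_le_of_injective (fun y => (⟨f (g y), hg y⟩ : Fin (x / (k + 1))))
    fun y z hyz => Subtype.ext (congrArg Subtype.val (hf (Fin.ext (Fin.mk.inj hyz))) :)
  rw [Fintype.card_coe, Fintype.card_fin, Nat.le_div_iff_mul_le (Nat.succ_pos k)] at this
  linarith

lemma card_filter_le_lt {X : Finset ℕ} {a b : ℕ} (hb : b ∈ X) (hab : a < b) :
    #{y ∈ X | y ≤ a} < #{y ∈ X | y ≤ b} := by
  refine card_lt_card ⟨fun y hy => ?_, fun h => ?_⟩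
  · rw [mem_filter] at hy ⊢
    exact ⟨hy.1, hy.2.trans hab.le⟩
  · exact (mem_filter.1 (h (mem_filter.2 ⟨hb, le_rfl⟩))).2.not_gt hab

theorem IsBallot.isPT {k n : ℕ} {X : Finset ℕ} (hX : X ⊆ Icc 1 ((k + 1) * n)) (hcard : #X ≤ n)
    (hb : IsBallot k X) :
    IsPT n (fun j => (k + 1) * ((j : ℕ) + 1)) (fun j => k * n + (j : ℕ) + 1) X := by
  set slot : ℕ → ℕ := fun x => max #{y ∈ X | y ≤ x} (x - k * n)
  have hrank_pos {x} (hx : x ∈ X) : 0 < #{y ∈ X | y ≤ x} :=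
    card_pos.2 ⟨x, mem_filter.2 ⟨hx, le_rfl⟩⟩
  have hslot {x} (hx : x ∈ X) :
      1 ≤ slot x ∧ slot x ≤ n ∧ (k + 1) * slot x ≤ x ∧ x ≤ k * n + slot x := by
    have hxn : x ≤ k * n + n := by simpa [add_mul] using (mem_Icc.1 (hX hx)).2
    have hright : x - k * n ≤ slot x := le_max_right _ _
    have hrank_le : #{y ∈ X | y ≤ x} ≤ n := (card_filter_le _ _).trans hcard
    have hexcess : (k + 1) * (x - k * n) ≤ x := by
      rcases le_total x (k * n) with h | h
      · simp [Nat.sub_eq_zero_of_le h]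
      · have : k * (x - k * n) ≤ k * n := Nat.mul_le_mul_left k (by omega)
        rw [add_mul, one_mul]
        omega
    exact ⟨(hrank_pos hx).trans_le (le_max_left _ _), max_le hrank_le (by omega),
      max_rec' (fun s => (k + 1) * s ≤ x) (hb x hx) hexcess, by omega⟩
  have hmono : StrictMonoOn slot X := fun a _ b hb hab => by
    refine max_lt ((card_filter_le_lt hb hab).trans_le (le_max_left _ _)) ?_
    rcases le_or_gt b (k * n) with h | h
    · rw [Nat.sub_eq_zero_of_le (hab.le.trans h)]
      exact (hrank_pos hb).trans_le (le_max_left _ _)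
    · exact (by omega : a - k * n < b - k * n).trans_le (le_max_right _ _)
  refine ⟨fun x => ⟨slot x - 1, by have := hslot x.2; omega⟩, fun x y hxy => ?_, fun x => ?_⟩
  · have hx := (hslot x.2).1
    have hy := (hslot y.2).1
    have hxy := congrArg Fin.val hxy
    exact Subtype.ext (hmono.injOn x.2 y.2 (by simp only at hxy; omega))
  · obtain ⟨h₁, -, h₃, h₄⟩ := hslot x.2
    simp only
    rw [Nat.sub_add_cancel h₁]
    exact ⟨h₃, by omega⟩

theorem isPT_iff_isBallot {k n : ℕ} {X : Finset ℕ} (hX : X ⊆ Icc 1 ((k + 1) * n))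
    (hcard : #X ≤ n) :
    IsPT n (fun j => (k + 1) * ((j : ℕ) + 1)) (fun j => k * n + (j : ℕ) + 1) X ↔ IsBallot k X :=
  ⟨IsPT.isBallot, IsBallot.isPT hX hcard⟩

theorem stmt10_general (k n i : ℕ) (hi : i ≤ n) :
    Nat.card {X : Finset ℕ // X ⊆ Finset.Icc 1 ((k + 1) * n) ∧ X.card = i ∧
        IsPT n (fun j => (k + 1) * ((j : ℕ) + 1)) (fun j => k * n + (j : ℕ) + 1) X}
      * ((k + 1) * n + 1)
      = ((k + 1) * (n - i) + 1) * Nat.choose ((k + 1) * n + 1) i := by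
  have hmem (X : Finset ℕ) : (X ⊆ Icc 1 ((k + 1) * n) ∧ #X = i ∧
      IsPT n (fun j => (k + 1) * ((j : ℕ) + 1)) (fun j => k * n + (j : ℕ) + 1) X) ↔
      X ∈ ballotSets k ((k + 1) * n) i := by
    rw [mem_ballotSets, and_assoc]
    refine and_congr_right fun hX => and_congr_right fun hcard => ?_
    exact isPT_iff_isBallot hX (hcard ▸ hi)
  rw [Nat.card_congr (Equiv.subtypeEquivRight hmem), Nat.card_eq_finsetCard, card_ballotSets_mul,
    Nat.mul_sub, Nat.sub_add_comm (Nat.mul_le_mul_left _ hi)]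

/-- **Independent sets of the k-Catalan matroid.**  The `k`-Catalan matroid `M^k_n`
is the lattice path matroid on `[1, (k+1)n]` with upper path `(E^k N)^n` and lower
path `E^{kn} N^n`, presented by the interval system `N_j = [(k+1)j, kn + j]` for
`j ∈ [n]`; its independent sets are the partial transversals.  For `i ≤ n`, the
number of independent sets of size `i`, multiplied by `(k+1)n + 1`, equals
`((k+1)(n-i) + 1) * ((k+1)n + 1 choose i)`. -/
theorem stmt10 (k n i : ℕ) (hk : 0 < k) (hi : i ≤ n) :
    Nat.card {X : Finset ℕ // X ⊆ Finset.Icc 1 ((k + 1) * n) ∧ X.card = i ∧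
        IsPT n (fun j => (k + 1) * ((j : ℕ) + 1)) (fun j => k * n + (j : ℕ) + 1) X}
      * ((k + 1) * n + 1)
      = ((k + 1) * (n - i) + 1) * Nat.choose ((k + 1) * n + 1) i :=
  stmt10_general k n i hi
end

section
/- Let B = {b_1 < b_2 < ... < b_r} be a basis of a lattice path matroid M[P,Q] with interval presentation (N_i = [l_i, u_i] : i ∈ [r]), and let x ∉ B with b_i < x < b_{i+1}. Then there exists j ≤ i such that (B − b_j) ∪ x is a basis of M[P,Q] if and only if x ∈ N_i. Equivalently, under the natural order on [m+r], x is externally active with respect to B if and only if the x-th step of the path P(B) is an East step of the lower bounding path P. -/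
open Finset

/-- Card transfer: counting elements of `S` satisfying `p` equals counting indices. -/
lemma filterCardEq {r : ℕ} {S : Finset ℕ} (h : S.card = r) (p : ℕ → Prop) [DecidablePred p] :
    (S.filter p).card = (univ.filter fun k : Fin r => p (S.orderEmbOfFin h k)).card := by
  symm
  apply Finset.card_bij (fun k _ => S.orderEmbOfFin h k)
  · intro a ha
    simp only [mem_filter, mem_univ, true_and] at ha
    exact mem_filter.mpr ⟨S.orderEmbOfFin_mem h a, ha⟩
  · intro a _ b _ hab
    exact (S.orderEmbOfFin h).injective hab
  · intro a ha
    obtain ⟨haS, hap⟩ := mem_filter.mp ha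
    obtain ⟨k, hk⟩ := Set.ext_iff.mp (S.range_orderEmbOfFin h) a |>.symm.mp haS
    refine ⟨k, ?_, hk⟩
    simp only [mem_filter, mem_univ, true_and]
    rw [hk]; exact hap

lemma sortedCount {r : ℕ} {S : Finset ℕ} (h : S.card = r) (k : Fin r) :
    (S.filter (· < S.orderEmbOfFin h k)).card = k.val := by
  rw [filterCardEq h]
  have : (univ.filter fun p : Fin r => S.orderEmbOfFin h p < S.orderEmbOfFin h k)
      = Finset.Iio k := by
    ext p; simp [(S.orderEmbOfFin h).strictMono.lt_iff_lt]
  rw [this, Fin.card_Iio]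

/-- The `k`-th smallest element of `S` is `a` iff `a ∈ S` and exactly `k` elements are below. -/
lemma eqOrderEmb {r : ℕ} {S : Finset ℕ} (h : S.card = r) {a : ℕ} (ha : a ∈ S) {k : Fin r}
    (hk : (S.filter (· < a)).card = k.val) : S.orderEmbOfFin h k = a := by
  obtain ⟨j, hj⟩ := Set.ext_iff.mp (S.range_orderEmbOfFin h) a |>.symm.mp ha
  have hjk : j = k := by
    have := sortedCount h j
    rw [hj, hk] at this
    exact Fin.ext this.symm
  rw [← hjk, hj]

/-- Monotone enumeration vs. a threshold `x`, given the count of elements below `x`. -/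
lemma ltIffOfCount {r : ℕ} {S : Finset ℕ} (h : S.card = r) {x c : ℕ}
    (hc : (S.filter (· < x)).card = c) (k : Fin r) :
    S.orderEmbOfFin h k < x ↔ k.val < c := by
  have hcard : (univ.filter fun p : Fin r => S.orderEmbOfFin h p < x).card = c := by
    rw [← filterCardEq h (· < x)]; exact hc
  constructor
  · intro hkx
    have hsub : Finset.Iic k ⊆ univ.filter fun p : Fin r => S.orderEmbOfFin h p < x := by
      intro p hp
      simp only [Finset.mem_Iic] at hp
      simp only [mem_filter, mem_univ, true_and]
      exact lt_of_le_of_lt ((S.orderEmbOfFin h).monotone hp) hkx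
    have := Finset.card_le_card hsub
    rw [Fin.card_Iic, hcard] at this
    omega
  · intro hkc
    by_contra hlt
    push_neg at hlt
    have hsub : (univ.filter fun p : Fin r => S.orderEmbOfFin h p < x) ⊆ Finset.Iio k := by
      intro p hp
      simp only [mem_filter, mem_univ, true_and] at hp
      simp only [Finset.mem_Iio]
      exact (S.orderEmbOfFin h).strictMono.lt_iff_lt.mp (lt_of_lt_of_le hp hlt)
    have := Finset.card_le_card hsub
    rw [Fin.card_Iio, hcard] at this
    omega

/-- A transversal of monotone intervals is a transversal in the sorted (greedy) way. -/
lemma transSorted {r : ℕ} {lo hi : Fin r → ℕ} (hlo : Monotone lo) (hhi : Monotone hi)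
    {S : Finset ℕ} (h : S.card = r) (ht : IsTransLH r lo hi S) (k : Fin r) :
    lo k ≤ S.orderEmbOfFin h k ∧ S.orderEmbOfFin h k ≤ hi k := by
  obtain ⟨f, hf, hfS⟩ := ht
  have hmem : ∀ j, (f j : ℕ) ∈ S := fun j => hfS ▸ mem_map_of_mem f (mem_univ j)
  have hr : ∀ j : Fin r, ∃ p : Fin r, S.orderEmbOfFin h p = f j := fun j =>
    Set.ext_iff.mp (S.range_orderEmbOfFin h) (f j) |>.symm.mp (hmem j)
  choose σ hσ using hr
  have hσinj : Function.Injective σ := by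
    intro a b hab
    apply f.injective
    rw [← hσ a, ← hσ b, hab]
  have hσbij : Function.Bijective σ := Finite.injective_iff_bijective.mp hσinj
  let E := Equiv.ofBijective σ hσbij
  constructor
  · have hcard1 : (univ.filter fun j : Fin r => σ j ≤ k).card = k.val + 1 := by
      rw [Finset.card_equiv E (t := Finset.Iic k) (fun p => by
        simp [E, Equiv.ofBijective_apply])]
      exact Fin.card_Iic k
    obtain ⟨j, hj1, hj2⟩ : ∃ j : Fin r, σ j ≤ k ∧ k ≤ j := by
      by_contra hcon
      push_neg at hcon
      have hsub : (univ.filter fun j : Fin r => σ j ≤ k) ⊆ Finset.Iio k := by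
        intro j hj
        simp only [mem_filter, mem_univ, true_and] at hj
        exact Finset.mem_Iio.mpr (hcon j hj)
      have := Finset.card_le_card hsub
      rw [Fin.card_Iio, hcard1] at this
      omega
    calc lo k ≤ lo j := hlo hj2
      _ ≤ f j := (hf j).1
      _ = S.orderEmbOfFin h (σ j) := (hσ j).symm
      _ ≤ S.orderEmbOfFin h k := (S.orderEmbOfFin h).monotone hj1
  · have hcard2 : (univ.filter fun j : Fin r => k ≤ σ j).card = r - k.val := by
      rw [Finset.card_equiv E (t := Finset.Ici k) (fun p => by
        simp [E, Equiv.ofBijective_apply])]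
      exact Fin.card_Ici k
    obtain ⟨j, hj1, hj2⟩ : ∃ j : Fin r, k ≤ σ j ∧ j ≤ k := by
      by_contra hcon
      push_neg at hcon
      have hsub : (univ.filter fun j : Fin r => k ≤ σ j) ⊆ Finset.Ioi k := by
        intro j hj
        simp only [mem_filter, mem_univ, true_and] at hj
        exact Finset.mem_Ioi.mpr (hcon j hj)
      have := Finset.card_le_card hsub
      rw [Fin.card_Ioi, hcard2] at this
      have := k.isLt
      omega
    calc S.orderEmbOfFin h k ≤ S.orderEmbOfFin h (σ j) := (S.orderEmbOfFin h).monotone hj1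
      _ = f j := hσ j
      _ ≤ hi j := (hf j).2
      _ ≤ hi k := hhi hj2

/-- Converse: the sorted bounds give a transversal. -/
lemma sortedTrans {r : ℕ} {lo hi : Fin r → ℕ} {S : Finset ℕ} (h : S.card = r)
    (hb : ∀ k : Fin r, lo k ≤ S.orderEmbOfFin h k ∧ S.orderEmbOfFin h k ≤ hi k) :
    IsTransLH r lo hi S := by
  refine ⟨(S.orderEmbOfFin h).toEmbedding, hb, ?_⟩
  apply Finset.eq_of_subset_of_card_le
  · intro a ha
    obtain ⟨k, _, hk⟩ := Finset.mem_map.mp ha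
    exact hk ▸ S.orderEmbOfFin_mem h k
  · rw [Finset.card_map, Finset.card_univ, Fintype.card_fin, h]

/-- **External activity in lattice path matroids.**  Let `M[P,Q]` be a lattice path
matroid with interval presentation `N_j = [l_j, u_j]` (`l_j`, `u_j` the positions of
the `j`-th North steps of the upper path `Q` and lower path `P`), let
`B = {b_1 < ⋯ < b_r}` be a basis (a transversal), and let `x ∉ B` lie in the ground
set with exactly `i + 1` elements of `B` below it (so `b_{i+1} < x < b_{i+2}` in
1-indexed terms, `i : Fin r`).  Then:
(1) there is `j ≤ i` with `(B - b_{j+1}) ∪ x` a basis iff `x ∈ N_{i+1}`, i.e.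
`l_{i+1} ≤ x ≤ u_{i+1}`;
(2) equivalently, `x` is externally active with respect to `B` (no `y ∈ B` with
`y < x` makes `(B - y) ∪ x` a basis) iff the `x`-th step of the path `P(B)` is an
East step of the lower bounding path `P`: `x` is an East step of `P` and the two
paths are at the same height just before it. -/
theorem stmt13 (m r : ℕ) (P Q B : Finset ℕ)
    (hPs : P ⊆ Finset.Icc 1 (m + r)) (hQs : Q ⊆ Finset.Icc 1 (m + r))
    (hP : P.card = r) (hQ : Q.card = r)
    (hPQ : ∀ p ≤ m + r, (P.filter (· ≤ p)).card ≤ (Q.filter (· ≤ p)).card)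
    (hB : B.card = r)
    (hBasis : IsTransLH r (fun j => (Q.orderIsoOfFin hQ j : ℕ))
      (fun j => (P.orderIsoOfFin hP j : ℕ)) B)
    (x : ℕ) (hx : x ∈ Finset.Icc 1 (m + r)) (hxB : x ∉ B)
    (i : Fin r) (hcount : (B.filter (· < x)).card = (i : ℕ) + 1) :
    ((∃ j : Fin r, j ≤ i ∧
        IsTransLH r (fun j => (Q.orderIsoOfFin hQ j : ℕ)) (fun j => (P.orderIsoOfFin hP j : ℕ))
          (insert x (B.erase (B.orderIsoOfFin hB j : ℕ))))
      ↔ ((Q.orderIsoOfFin hQ i : ℕ) ≤ x ∧ x ≤ (P.orderIsoOfFin hP i : ℕ)))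
    ∧ ((¬ ∃ y ∈ B, y < x ∧
          IsTransLH r (fun j => (Q.orderIsoOfFin hQ j : ℕ)) (fun j => (P.orderIsoOfFin hP j : ℕ))
            (insert x (B.erase y)))
      ↔ (x ∉ P ∧ (B.filter (· ≤ x - 1)).card = (P.filter (· ≤ x - 1)).card)) := by
  simp only [Finset.coe_orderIsoOfFin_apply] at *
  set l : Fin r → ℕ := fun j => Q.orderEmbOfFin hQ j with hl
  set u : Fin r → ℕ := fun j => P.orderEmbOfFin hP j with hu
  set b : Fin r → ℕ := fun j => B.orderEmbOfFin hB j with hbdef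
  have hlo : Monotone l := (Q.orderEmbOfFin hQ).monotone
  have hhi : Monotone u := (P.orderEmbOfFin hP).monotone
  have hx1 : 1 ≤ x := (Finset.mem_Icc.mp hx).1
  have hbB : ∀ k, b k ∈ B := fun k => B.orderEmbOfFin_mem hB k
  have hbne : ∀ k, b k ≠ x := fun k hk => hxB (hk ▸ hbB k)
  have hblt : ∀ k : Fin r, b k < x ↔ k.val < i.val + 1 := ltIffOfCount hB hcount
  have hbgt : ∀ k : Fin r, i < k → x < b k := by
    intro k hk
    have h1 : ¬ b k < x := by
      rw [hblt k]; omega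
    exact lt_of_le_of_ne (not_lt.mp h1) (Ne.symm (hbne k))
  have hAB : ∀ k, l k ≤ b k ∧ b k ≤ u k := transSorted hlo hhi hB hBasis
  -- key: any exchange witness forces `l i ≤ x ≤ u i`
  have key : ∀ y ∈ B, y < x → IsTransLH r l u (insert x (B.erase y)) →
      l i ≤ x ∧ x ≤ u i := by
    intro y hy hyx htr
    set B' := insert x (B.erase y) with hB'def
    have hxe : x ∉ B.erase y := fun hc => hxB (Finset.mem_of_mem_erase hc)
    have hB' : B'.card = r := by
      rw [hB'def, Finset.card_insert_of_notMem hxe, Finset.card_erase_of_mem hy, hB]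
      have := i.isLt; omega
    have hfilt : (B'.filter (· < x)).card = i.val := by
      have h1 : B'.filter (· < x) = (B.filter (· < x)).erase y := by
        rw [hB'def, Finset.filter_insert, if_neg (lt_irrefl x), Finset.filter_erase]
      have hyf : y ∈ B.filter (· < x) := Finset.mem_filter.mpr ⟨hy, hyx⟩
      rw [h1, Finset.card_erase_of_mem hyf, hcount]
      omega
    have hcx : B'.orderEmbOfFin hB' i = x :=
      eqOrderEmb hB' (Finset.mem_insert_self x _) hfilt
    have := transSorted hlo hhi hB' htr i
    rwa [hcx] at this
  -- construction: if `l i ≤ x ≤ u i` then exchanging `b i` works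
  have construct : l i ≤ x → x ≤ u i → IsTransLH r l u (insert x (B.erase (b i))) := by
    intro hli hui
    set B' := insert x (B.erase (b i)) with hB'def
    have hxe : x ∉ B.erase (b i) := fun hc => hxB (Finset.mem_of_mem_erase hc)
    have hB' : B'.card = r := by
      rw [hB'def, Finset.card_insert_of_notMem hxe,
        Finset.card_erase_of_mem (hbB i), hB]
      have := i.isLt; omega
    have hbix : b i < x := (hblt i).mpr (by omega)
    apply sortedTrans hB'
    intro k
    have hck : B'.orderEmbOfFin hB' k = if k = i then x else b k := by
      rcases eq_or_ne k i with hk | hk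
      · subst hk
        simp only [if_pos rfl]
        apply eqOrderEmb hB' (Finset.mem_insert_self x _)
        have hbf : b k ∈ B.filter (· < x) := Finset.mem_filter.mpr ⟨hbB k, hbix⟩
        rw [hB'def, Finset.filter_insert, if_neg (lt_irrefl x), Finset.filter_erase,
          Finset.card_erase_of_mem hbf, hcount]
        omega
      · simp only [if_neg hk]
        have hbkB' : b k ∈ B' := by
          rw [hB'def]
          exact Finset.mem_insert_of_mem (Finset.mem_erase.mpr
            ⟨fun hc => hk ((B.orderEmbOfFin hB).injective hc), hbB k⟩)
        apply eqOrderEmb hB' hbkB'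
        rcases lt_or_gt_of_ne hk with hki | hki
        · -- k < i : x is not below b k, and b i is not below b k
          have hxk : ¬ x < b k := by
            have : b k < x := (hblt k).mpr (by have := hki; omega)
            omega
          have hbik : b i ∉ B.filter (· < b k) := by
            simp only [Finset.mem_filter, not_and]
            intro _
            exact not_lt.mpr ((B.orderEmbOfFin hB).monotone hki.le)
          rw [hB'def, Finset.filter_insert, if_neg hxk, Finset.filter_erase,
            Finset.erase_eq_of_notMem hbik]
          exact sortedCount hB k
        · -- i < k : x < b k and b i < b k
          have hxk : x < b k := hbgt k hki
          have hbik : b i ∈ B.filter (· < b k) := Finset.mem_filter.mpr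
            ⟨hbB i, (B.orderEmbOfFin hB).strictMono hki⟩
          have hxmem : x ∉ (B.filter (· < b k)).erase (b i) := by
            intro hc
            exact hxB (Finset.mem_filter.mp (Finset.mem_of_mem_erase hc)).1
          rw [hB'def, Finset.filter_insert, if_pos hxk, Finset.filter_erase,
            Finset.card_insert_of_notMem hxmem,
            Finset.card_erase_of_mem hbik, sortedCount hB k]
          have : i.val < k.val := hki
          omega
    rw [hck]
    rcases eq_or_ne k i with hk | hk
    · subst hk; simp only [if_pos rfl]; exact ⟨hli, hui⟩
    · simp only [if_neg hk]; exact hAB k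
  constructor
  · -- part (1)
    constructor
    · rintro ⟨j, hj, htr⟩
      have hbj : b j < x := (hblt j).mpr (by have : j.val ≤ i.val := hj; omega)
      exact key (b j) (hbB j) hbj htr
    · rintro ⟨hli, hui⟩
      exact ⟨i, le_refl i, construct hli hui⟩
  · -- part (2)
    have hiff1 : (∃ y ∈ B, y < x ∧ IsTransLH r l u (insert x (B.erase y))) ↔ x ≤ u i := by
      constructor
      · rintro ⟨y, hy, hyx, htr⟩
        exact (key y hy hyx htr).2
      · intro hui
        have hli : l i ≤ x := le_of_lt (lt_of_le_of_lt (hAB i).1 ((hblt i).mpr (by omega)))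
        exact ⟨b i, hbB i, (hblt i).mpr (by omega), construct hli hui⟩
    have hle : ∀ S : Finset ℕ, S.filter (· ≤ x - 1) = S.filter (· < x) := by
      intro S
      apply Finset.filter_congr
      intro a _
      omega
    have hiff2 : (x ∉ P ∧ (B.filter (· ≤ x - 1)).card = (P.filter (· ≤ x - 1)).card)
        ↔ u i < x := by
      rw [hle B, hle P, hcount]
      constructor
      · rintro ⟨_, hcP⟩
        exact (ltIffOfCount hP hcP.symm i).mpr (by omega)
      · intro hui
        have hui' : P.orderEmbOfFin hP i < x := hui
        have hgt : ∀ k : Fin r, i < k → x < P.orderEmbOfFin hP k := fun k hk =>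
          lt_of_lt_of_le (hbgt k hk) (hAB k).2
        constructor
        · intro hxP
          obtain ⟨k, hk⟩ := Set.ext_iff.mp (P.range_orderEmbOfFin hP) x |>.symm.mp hxP
          have hik : i < k := by
            by_contra hc
            push_neg at hc
            have h2 : P.orderEmbOfFin hP k ≤ P.orderEmbOfFin hP i :=
              (P.orderEmbOfFin hP).monotone hc
            omega
          have := hgt k hik
          omega
        · rw [filterCardEq hP (· < x)]
          have : (univ.filter fun k : Fin r => P.orderEmbOfFin hP k < x) = Finset.Iic i := by
            ext k
            simp only [mem_filter, mem_univ, true_and, Finset.mem_Iic]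
            constructor
            · intro hk
              by_contra hc
              push_neg at hc
              have := hgt k hc
              omega
            · intro hk
              exact lt_of_le_of_lt ((P.orderEmbOfFin hP).monotone hk) hui'
          rw [this, Fin.card_Iic]
    rw [hiff1, hiff2]
    omega
end
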